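/- arXiv:2003.08041 — 7 statements merged into one kernel-verified Lean document; each statement's English description precedes it below -/
import Mathlib

section
/- If Θ is a nondegenerate symmetric d-multilinear form on a finite-dimensional k-vector space V, then the center Z(V,Θ) is a commutative unital subalgebra of the endomorphism algebra End(V): it contains the identity, is closed under addition, scalar multiplication and composition, and any two of its elements commute. -/
/-- If `Θ` is a nondegenerate symmetric `d`-multilinear form on a
finite-dimensional `k`-vector space `V`, then the center `Z(V,Θ)` is a commutative unital
subalgebra of `End(V)`: it contains the identity, is closed under addition, scalar
multiplication and composition, and any two of its elements commute. -/
theorem stmt_0 {k V : Type*} [Field k] [AddCommGroup V] [Module k V]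
    [FiniteDimensional k V] {d : ℕ} (hd : 3 ≤ d)
    (hchar : CharZero k ∨ ∃ p : ℕ, CharP k p ∧ d < p)
    (Θ : MultilinearMap k (fun _ : Fin d => V) k)
    (hsymm : ∀ (σ : Equiv.Perm (Fin d)) (v : Fin d → V), Θ (v ∘ σ) = Θ v)
    (hnd : ∀ u : V,
      (∀ v : Fin d → V, Θ (Function.update v ⟨0, by omega⟩ u) = 0) → u = 0) :
    let i0 : Fin d := ⟨0, by omega⟩
    let i1 : Fin d := ⟨1, by omega⟩
    let Z : Set (Module.End k V) := {φ | ∀ v : Fin d → V,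
      Θ (Function.update v i0 (φ (v i0))) = Θ (Function.update v i1 (φ (v i1)))}
    ((1 : Module.End k V) ∈ Z) ∧
    (∀ φ ∈ Z, ∀ ψ ∈ Z, φ + ψ ∈ Z) ∧
    (∀ c : k, ∀ φ ∈ Z, c • φ ∈ Z) ∧
    (∀ φ ∈ Z, ∀ ψ ∈ Z, φ * ψ ∈ Z) ∧
    (∀ φ ∈ Z, ∀ ψ ∈ Z, φ * ψ = ψ * φ) := by
  intro i0 i1 Z
  have h01 : i0 ≠ i1 := by simp [i0, i1, Fin.ext_iff]
  -- the element φ of Z can be moved between any two slots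
  have move : ∀ φ ∈ Z, ∀ (i j : Fin d) (v : Fin d → V),
      Θ (Function.update v i (φ (v i))) = Θ (Function.update v j (φ (v j))) := by
    intro φ hφ i j v
    by_cases hij : i = j
    · subst hij; rfl
    · -- build a permutation σ with σ i0 = i and σ i1 = j
      set τ : Equiv.Perm (Fin d) := Equiv.swap i0 i with hτ
      have hτ0 : τ i0 = i := Equiv.swap_apply_left _ _
      set j' : Fin d := τ.symm j with hj'def
      have hj'0 : j' ≠ i0 := by
        intro h
        apply hij
        have : τ j' = j := τ.apply_symm_apply j
        rw [h, hτ0] at this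
        exact this
      set σ : Equiv.Perm (Fin d) := (Equiv.swap i1 j').trans τ with hσ
      have hσ0 : σ i0 = i := by
        simp only [hσ, Equiv.trans_apply]
        rw [Equiv.swap_apply_of_ne_of_ne h01 (Ne.symm hj'0), hτ0]
      have hσ1 : σ i1 = j := by
        simp only [hσ, Equiv.trans_apply]
        rw [Equiv.swap_apply_left]
        exact τ.apply_symm_apply j
      have e0 : Function.update v i (φ (v i)) ∘ σ
          = Function.update (v ∘ σ) i0 (φ ((v ∘ σ) i0)) := by
        rw [Function.update_comp_equiv]
        have hs : σ.symm i = i0 := (Equiv.symm_apply_eq σ).mpr hσ0.symm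
        rw [hs]
        simp only [Function.comp_apply, hσ0]
      have e1 : Function.update v j (φ (v j)) ∘ σ
          = Function.update (v ∘ σ) i1 (φ ((v ∘ σ) i1)) := by
        rw [Function.update_comp_equiv]
        have hs : σ.symm j = i1 := (Equiv.symm_apply_eq σ).mpr hσ1.symm
        rw [hs]
        simp only [Function.comp_apply, hσ1]
      calc Θ (Function.update v i (φ (v i)))
          = Θ (Function.update v i (φ (v i)) ∘ σ) := (hsymm σ _).symm
        _ = Θ (Function.update (v ∘ σ) i0 (φ ((v ∘ σ) i0))) := by rw [e0]
        _ = Θ (Function.update (v ∘ σ) i1 (φ ((v ∘ σ) i1))) := hφ _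
        _ = Θ (Function.update v j (φ (v j)) ∘ σ) := by rw [e1]
        _ = Θ (Function.update v j (φ (v j))) := hsymm σ _
  obtain ⟨i2, h20, h21⟩ : ∃ i2 : Fin d, i2 ≠ i0 ∧ i2 ≠ i1 :=
    ⟨⟨2, by omega⟩, by simp [i0, Fin.ext_iff], by simp [i1, Fin.ext_iff]⟩
  -- the key exchange identity
  have star : ∀ φ ∈ Z, ∀ ψ ∈ Z, ∀ (i j : Fin d), i ≠ j → ∀ v : Fin d → V,
      Θ (Function.update v i (φ (ψ (v i)))) = Θ (Function.update v j (ψ (φ (v j)))) := by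
    intro φ hφ ψ hψ i j hij v
    have s1 : Function.update v i (φ (ψ (v i)))
        = Function.update (Function.update v i (ψ (v i))) i
            (φ ((Function.update v i (ψ (v i))) i)) := by
      simp [Function.update_idem]
    rw [s1, move φ hφ i j]
    rw [Function.update_of_ne (Ne.symm hij)]
    have s2 : Function.update (Function.update v i (ψ (v i))) j (φ (v j))
        = Function.update (Function.update v j (φ (v j))) i
            (ψ ((Function.update v j (φ (v j))) i)) := by
      rw [Function.update_comm hij]
      congr 1
      rw [Function.update_of_ne hij]
    rw [s2, move ψ hψ i j]
    rw [Function.update_self, Function.update_idem]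
  -- closure under multiplication
  have hmul : ∀ φ ∈ Z, ∀ ψ ∈ Z, φ * ψ ∈ Z := by
    intro φ hφ ψ hψ v
    have h1 := star φ hφ ψ hψ i0 i2 (Ne.symm h20) v
    have h2 := star ψ hψ φ hφ i2 i1 h21 v
    simpa [Module.End.mul_apply] using h1.trans h2
  have hcomm0 : ∀ φ ∈ Z, ∀ ψ ∈ Z, ∀ v : Fin d → V,
      Θ (Function.update v i0 (φ (ψ (v i0)))) = Θ (Function.update v i0 (ψ (φ (v i0)))) := by
    intro φ hφ ψ hψ v
    have h1 := star φ hφ ψ hψ i0 i2 (Ne.symm h20) v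
    have h2 := move (ψ * φ) (hmul ψ hψ φ hφ) i2 i0 v
    simp only [Module.End.mul_apply] at h2
    exact h1.trans h2
  refine ⟨?_, ?_, ?_, hmul, ?_⟩
  · intro v
    simp [Module.End.one_apply, Function.update_eq_self]
  · intro φ hφ ψ hψ v
    simp only [LinearMap.add_apply, MultilinearMap.map_update_add, hφ v, hψ v]
  · intro c φ hφ v
    simp only [LinearMap.smul_apply, MultilinearMap.map_update_smul, hφ v]
  · intro φ hφ ψ hψ
    ext x
    have key : ∀ v : Fin d → V, Θ (Function.update v i0 (φ (ψ x) - ψ (φ x))) = 0 := by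
      intro v
      have h := hcomm0 φ hφ ψ hψ (Function.update v i0 x)
      simp only [Function.update_self, Function.update_idem] at h
      rw [MultilinearMap.map_update_sub, h, sub_self]
    have h0 := hnd _ key
    rw [sub_eq_zero] at h0
    simpa [Module.End.mul_apply] using h0
end

section
/- Let A = (a_{i₁⋯i_d}) be a symmetric d-tensor of dimension n over k, let f = Σ_{i₁,…,i_d} a_{i₁⋯i_d} x_{i₁}⋯x_{i_d} be the associated homogeneous polynomial of degree d, and let H = (∂²f/∂xᵢ∂xⱼ) be its Hessian matrix (an n×n matrix with polynomial entries). Then an n×n matrix X over k satisfies Xᵀ A^{(i₃⋯i_d)} = A^{(i₃⋯i_d)} X for all i₃,…,i_d if and only if the matrix of polynomials H·X is symmetric, i.e. (HX)ᵀ = HX. -/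
/-!
Write `f_B = ∑_c B(c) x_{c 1} ⋯ x_{c m}` for the form of a tensor `B` of order `m`. If `B` is
symmetric of order `m + 1`, differentiating each factor of each monomial and moving the
differentiated slot to the front gives `∂ⱼ f_B = (m + 1) f_{B(j, ·)}`. Applied twice this shows
that the Hessian of `f_A` is `d (d - 1) ∑_c A^{(c)} x^c`, so `(HX)ᵀ - HX` is `d (d - 1)` times the
matrix of forms of the symmetric family `c ↦ Xᵀ A^{(c)} - A^{(c)} X`. Applied `e` times it shows
that a symmetric tensor of order `e` whose form vanishes is killed by `e!`, hence is zero when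
`char k > e`.
-/

open Matrix MvPolynomial
open scoped Nat

section SymmTensor

variable {ι R : Type*} {m : ℕ}

def IsSymmTensor (B : (Fin m → ι) → R) : Prop :=
  ∀ (σ : Equiv.Perm (Fin m)) (c : Fin m → ι), B (c ∘ σ) = B c

namespace IsSymmTensor

variable {B : (Fin m → ι) → R}

lemma comp {S : Type*} (hB : IsSymmTensor B) (g : R → S) : IsSymmTensor fun c => g (B c) :=
  fun σ c => congrArg g (hB σ c)

lemma sub [Sub R] {B' : (Fin m → ι) → R} (hB : IsSymmTensor B) (hB' : IsSymmTensor B') :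
    IsSymmTensor (B - B') :=
  fun σ c => by simp only [Pi.sub_apply, hB σ c, hB' σ c]

lemma cons {B : (Fin (m + 1) → ι) → R} (hB : IsSymmTensor B) (j : ι) :
    IsSymmTensor fun c : Fin m → ι => B (Fin.cons j c) := by
  intro σ c
  have hperm : (Fin.cons j (c ∘ σ) : Fin (m + 1) → ι) =
      Fin.cons j c ∘ Equiv.Perm.decomposeFin.symm (0, σ) := by
    ext t
    refine Fin.cases ?_ (fun s => ?_) t
    · simp [Equiv.Perm.decomposeFin_symm_apply_zero]
    · simp [Equiv.Perm.decomposeFin_symm_apply_succ]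
  exact (congrArg B hperm).trans (hB _ _)

lemma insertNth {B : (Fin (m + 1) → ι) → R} (hB : IsSymmTensor B) (p : Fin (m + 1)) (j : ι)
    (c : Fin m → ι) : B (p.insertNth j c) = B (Fin.cons j c) := by
  rw [← Fin.cons_comp_cycleRange, hB]

lemma cons_cons_comm {B : (Fin (m + 2) → ι) → R} (hB : IsSymmTensor B) (i j : ι)
    (c : Fin m → ι) : B (Fin.cons i (Fin.cons j c)) = B (Fin.cons j (Fin.cons i c)) := by
  rw [← hB.insertNth (0 : Fin (m + 1)).succ, Fin.insertNth_succ_cons, Fin.insertNth_zero']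

end IsSymmTensor

def tensorSlice (A : (Fin (m + 2) → ι) → R) (c : Fin m → ι) : Matrix ι ι R :=
  of fun i j => A (Fin.cons i (Fin.cons j c))

lemma isSymmTensor_tensorSlice {A : (Fin (m + 2) → ι) → R} (hA : IsSymmTensor A) :
    IsSymmTensor (tensorSlice A) := fun σ c => by
  ext i j
  exact (hA.cons i).cons j σ c

lemma tensorSlice_transpose {A : (Fin (m + 2) → ι) → R} (hA : IsSymmTensor A)
    (c : Fin m → ι) : (tensorSlice A c)ᵀ = tensorSlice A c := by
  ext i j
  exact hA.cons_cons_comm j i c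

end SymmTensor

section TensorForm

variable {ι R α β γ : Type*} {m : ℕ}

section CommSemiring

variable [CommSemiring R]

lemma pderiv_prod_X [DecidableEq ι] (c : Fin (m + 1) → ι) (j : ι) :
    pderiv j (∏ t, X (c t) : MvPolynomial ι R) =
      ∑ t, if c t = j then ∏ s, X (c (t.succAbove s)) else 0 := by
  induction m with
  | zero => rw [Fin.prod_univ_one, Fin.sum_univ_one]; simp [Pi.single_apply]
  | succ m ih =>
    rw [Fin.prod_univ_succ, pderiv_mul, ih (fun t => c t.succ), Fin.sum_univ_succ (n := m + 1),
      pderiv_X, Finset.mul_sum]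
    congr 1
    · simp [Pi.single_apply]
    · refine Finset.sum_congr rfl fun t _ => ?_
      rw [Fin.prod_univ_succ]
      simp only [Fin.succ_succAbove_zero, Fin.succ_succAbove_succ, mul_ite, mul_zero]

variable [Fintype ι]

variable (R) in
noncomputable def tensorForm : ((Fin m → ι) → R) →ₗ[R] MvPolynomial ι R where
  toFun B := ∑ c, C (B c) * ∏ t, X (c t)
  map_add' B B' := by simp only [Pi.add_apply, map_add, add_mul, Finset.sum_add_distrib]
  map_smul' a B := by
    simp only [Pi.smul_apply, smul_eq_mul, map_mul, Finset.smul_sum, smul_eq_C_mul, mul_assoc,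
      RingHom.id_apply]

lemma tensorForm_apply (B : (Fin m → ι) → R) :
    tensorForm R B = ∑ c, C (B c) * ∏ t, X (c t) := rfl

lemma pderiv_tensorForm [DecidableEq ι] {B : (Fin (m + 1) → ι) → R} (hB : IsSymmTensor B)
    (j : ι) : pderiv j (tensorForm R B) = (m + 1) • tensorForm R fun c => B (Fin.cons j c) := by
  have hslot : ∀ p : Fin (m + 1),
      ∑ c : Fin (m + 1) → ι, C (B c) * (if c p = j then ∏ s, X (c (p.succAbove s)) else 0)
        = tensorForm R fun c => B (Fin.cons j c) := by
    intro p
    rw [← (Fin.insertNthEquiv (fun _ => ι) p).sum_comp, Fintype.sum_prod_type, Finset.sum_comm]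
    simp [Fin.insertNthEquiv, hB.insertNth, tensorForm_apply]
  simp only [tensorForm_apply, map_sum, pderiv_C_mul, pderiv_prod_X, Finset.mul_sum]
  rw [Finset.sum_comm]
  simp only [hslot, tensorForm_apply, Finset.sum_const, Finset.card_univ, Fintype.card_fin]

noncomputable def tensorFormMatrix (M : (Fin m → ι) → Matrix α β R) :
    Matrix α β (MvPolynomial ι R) :=
  of fun i j => tensorForm R fun c => M c i j

lemma tensorFormMatrix_transpose (M : (Fin m → ι) → Matrix α β R) :
    (tensorFormMatrix M)ᵀ = tensorFormMatrix fun c => (M c)ᵀ := rfl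

lemma tensorFormMatrix_mul_map_C [Fintype β] (M : (Fin m → ι) → Matrix α β R)
    (Y : Matrix β γ R) :
    tensorFormMatrix M * Y.map (C : R →+* MvPolynomial ι R) =
      tensorFormMatrix fun c => M c * Y := by
  ext i j : 1
  simp only [tensorFormMatrix, mul_apply, of_apply, map_apply, mul_comm _ (C _), C_mul',
    ← map_smul, ← map_sum]
  congr 1
  ext c
  simp only [Finset.sum_apply, Pi.smul_apply, smul_eq_mul, mul_comm]

lemma hessian_tensorForm [DecidableEq ι] {A : (Fin (m + 2) → ι) → R} (hA : IsSymmTensor A) :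
    (of fun i j => pderiv i (pderiv j (tensorForm R A)) : Matrix ι ι (MvPolynomial ι R)) =
      ((m + 2) * (m + 1)) • tensorFormMatrix (tensorSlice A) := by
  ext i j : 1
  rw [of_apply, pderiv_tensorForm hA, map_nsmul, pderiv_tensorForm (hA.cons j), smul_smul,
    Matrix.smul_apply, tensorFormMatrix, of_apply]
  congr 2
  funext c
  exact hA.cons_cons_comm j i c

end CommSemiring

section Domain

variable [CommRing R] [IsDomain R]

lemma natCast_factorial_ne_zero {d : ℕ} (hchar : CharZero R ∨ ∃ p, CharP R p ∧ d < p) :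
    (d ! : R) ≠ 0 := by
  rcases hchar with hR | ⟨p, hp, hdp⟩
  · exact Nat.cast_ne_zero.mpr d.factorial_ne_zero
  · rw [Ne, CharP.cast_eq_zero_iff R p]
    rcases CharP.char_is_prime_or_zero R p with hprime | rfl
    · rw [hprime.dvd_factorial]
      omega
    · omega

variable [Fintype ι] [DecidableEq ι]

lemma IsSymmTensor.eq_zero_of_tensorForm_eq_zero {B : (Fin m → ι) → R} (hB : IsSymmTensor B)
    (hm : (m ! : R) ≠ 0) (h : tensorForm R B = 0) : B = 0 := by
  induction m with
  | zero =>
    funext c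
    simpa [tensorForm_apply, Subsingleton.elim _ c] using h
  | succ m ih =>
    rw [Nat.factorial_succ, Nat.cast_mul, mul_ne_zero_iff] at hm
    have hcons : ∀ j, (fun c => B (Fin.cons j c)) = 0 := fun j => by
      refine ih (hB.cons j) hm.2 ?_
      have hderiv := pderiv_tensorForm hB j
      rw [h, map_zero, eq_comm, nsmul_eq_mul, mul_eq_zero] at hderiv
      refine hderiv.resolve_left ?_
      rw [← map_natCast (C : R →+* MvPolynomial ι R), C_eq_zero]
      exact hm.1
    funext c
    rw [← Fin.cons_self_tail c]
    exact congrFun (hcons (c 0)) (Fin.tail c)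

lemma tensorForm_injOn (hm : (m ! : R) ≠ 0) :
    Set.InjOn (tensorForm R) {B : (Fin m → ι) → R | IsSymmTensor B} := fun B hB B' hB' h =>
  sub_eq_zero.mp <| (IsSymmTensor.sub hB hB').eq_zero_of_tensorForm_eq_zero hm <| by
    rw [map_sub, h, sub_self]

lemma IsSymmTensor.tensorFormMatrix_inj {M M' : (Fin m → ι) → Matrix α β R}
    (hM : IsSymmTensor M) (hM' : IsSymmTensor M') (hm : (m ! : R) ≠ 0) :
    tensorFormMatrix M = tensorFormMatrix M' ↔ M = M' := by
  refine ⟨fun h => ?_, congrArg _⟩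
  funext c
  ext i j
  have hij := tensorForm_injOn hm (hM.comp fun N => N i j) (hM'.comp fun N => N i j)
    (congrFun (congrFun h i) j)
  exact congrFun hij c

end Domain

end TensorForm

theorem stmt_2_general {k : Type*} [Field k] {n e : ℕ}
    (hchar : CharZero k ∨ ∃ p : ℕ, CharP k p ∧ e + 2 < p)
    (A : (Fin (e + 2) → Fin n) → k)
    (hA : ∀ (σ : Equiv.Perm (Fin (e + 2))) (idx : Fin (e + 2) → Fin n), A (idx ∘ σ) = A idx)
    (X : Matrix (Fin n) (Fin n) k) :
    let f : MvPolynomial (Fin n) k :=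
      ∑ idx : Fin (e + 2) → Fin n, C (A idx) * ∏ t, MvPolynomial.X (idx t)
    let H : Matrix (Fin n) (Fin n) (MvPolynomial (Fin n) k) :=
      Matrix.of fun i j => pderiv i (pderiv j f)
    (∀ c : Fin e → Fin n,
        Xᵀ * Matrix.of (fun i j => A (Fin.cons i (Fin.cons j c)))
          = Matrix.of (fun i j => A (Fin.cons i (Fin.cons j c))) * X)
      ↔ (H * X.map C)ᵀ = H * X.map C := by
  intro f H
  have hS : IsSymmTensor (tensorSlice A) := isSymmTensor_tensorSlice hA
  have hfact : (((e + 2) * (e + 1) * e ! : ℕ) : k) ≠ 0 := by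
    rw [mul_assoc, ← Nat.factorial_succ]
    exact natCast_factorial_ne_zero hchar
  rw [Nat.cast_mul, mul_ne_zero_iff] at hfact
  have hH : H = ((e + 2) * (e + 1)) • tensorFormMatrix (tensorSlice A) := hessian_tensorForm hA
  rw [hH, Matrix.smul_mul, transpose_smul, tensorFormMatrix_mul_map_C,
    ← Nat.cast_smul_eq_nsmul k, ← Nat.cast_smul_eq_nsmul k, smul_right_inj hfact.1,
    tensorFormMatrix_transpose]
  simp_rw [transpose_mul, tensorSlice_transpose hA]
  rw [(hS.comp (Xᵀ * ·)).tensorFormMatrix_inj (hS.comp (· * X)) hfact.2, funext_iff]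
  rfl

/-- Let `A` be a symmetric `d`-tensor (here `d = e + 2 ≥ 3`) of dimension `n`
over `k`, `f = Σ a_{i₁⋯i_d} x_{i₁}⋯x_{i_d}` the associated form and
`H = (∂²f/∂xᵢ∂xⱼ)` its Hessian matrix (with polynomial entries). Then an `n×n` matrix `X`
over `k` satisfies `Xᵀ A^{(i₃⋯i_d)} = A^{(i₃⋯i_d)} X` for all slices iff the polynomial matrix
`H·X` is symmetric, i.e. `(HX)ᵀ = HX`. -/
theorem stmt_2 {k : Type*} [Field k] {n e : ℕ} (he : 1 ≤ e)
    (hchar : CharZero k ∨ ∃ p : ℕ, CharP k p ∧ e + 2 < p)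
    (A : (Fin (e + 2) → Fin n) → k)
    (hA : ∀ (σ : Equiv.Perm (Fin (e + 2))) (idx : Fin (e + 2) → Fin n), A (idx ∘ σ) = A idx)
    (X : Matrix (Fin n) (Fin n) k) :
    let f : MvPolynomial (Fin n) k :=
      ∑ idx : Fin (e + 2) → Fin n, C (A idx) * ∏ t, MvPolynomial.X (idx t)
    let H : Matrix (Fin n) (Fin n) (MvPolynomial (Fin n) k) :=
      Matrix.of fun i j => pderiv i (pderiv j f)
    (∀ c : Fin e → Fin n,
        Xᵀ * Matrix.of (fun i j => A (Fin.cons i (Fin.cons j c)))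
          = Matrix.of (fun i j => A (Fin.cons i (Fin.cons j c))) * X)
      ↔ (H * X.map C)ᵀ = H * X.map C :=
  stmt_2_general hchar A hA X
end

section
/- Let A be a symmetric d-tensor of dimension n over k and P ∈ GL(n,k). Writing Z(A) = {X ∈ k^{n×n} : Xᵀ A^{(i₃⋯i_d)} = A^{(i₃⋯i_d)} X for all i₃,…,i_d}, the center of the d-congruent tensor satisfies Z(AP^d) = P⁻¹ Z(A) P = {P⁻¹XP : X ∈ Z(A)}. -/
open Matrix

private lemma stmt3_aux1 {k : Type*} [Field k] {n e : ℕ}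
    (P : Matrix (Fin n) (Fin n) k) (hP : IsUnit P) (r r' : Fin e → Fin n) :
    ∑ c : Fin e → Fin n, ((∏ s, P⁻¹ (c s) (r' s)) * ∏ s, P (r s) (c s))
      = if r = r' then 1 else 0 := by
  have h1 : ∀ c : Fin e → Fin n, ((∏ s, P⁻¹ (c s) (r' s)) * ∏ s, P (r s) (c s))
      = ∏ s, P (r s) (c s) * P⁻¹ (c s) (r' s) := by
    intro c; rw [← Finset.prod_mul_distrib]; exact Finset.prod_congr rfl fun s _ => mul_comm _ _
  simp only [h1]
  have h2 : ∑ c : Fin e → Fin n, ∏ s, P (r s) (c s) * P⁻¹ (c s) (r' s)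
      = ∏ s, ∑ j, P (r s) j * P⁻¹ j (r' s) := by
    rw [Finset.prod_univ_sum]
    simp [Fintype.piFinset_univ]
  rw [h2]
  have h3 : P * P⁻¹ = 1 := Matrix.mul_nonsing_inv P ((Matrix.isUnit_iff_isUnit_det P).mp hP)
  have h4 : ∀ s, ∑ j, P (r s) j * P⁻¹ j (r' s) = (1 : Matrix (Fin n) (Fin n) k) (r s) (r' s) := by
    intro s; rw [← h3, Matrix.mul_apply]
  simp only [h4, Matrix.one_apply]
  by_cases h : r = r'
  · subst h; simp
  · rw [if_neg h]
    obtain ⟨s, hs⟩ := Function.ne_iff.mp h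
    exact Finset.prod_eq_zero (Finset.mem_univ s) (if_neg hs)

private lemma stmt3_recover {k : Type*} [Field k] {n e : ℕ}
    (P : Matrix (Fin n) (Fin n) k) (hP : IsUnit P)
    (N : (Fin e → Fin n) → Matrix (Fin n) (Fin n) k) (r' : Fin e → Fin n) :
    ∑ c : Fin e → Fin n, (∏ s, P⁻¹ (c s) (r' s)) •
        (∑ r : Fin e → Fin n, (∏ s, P (r s) (c s)) • N r) = N r' := by
  simp only [Finset.smul_sum, smul_smul]
  rw [Finset.sum_comm]
  have key : ∀ r : Fin e → Fin n,
      ∑ c : Fin e → Fin n, ((∏ s, P⁻¹ (c s) (r' s)) * ∏ s, P (r s) (c s)) • N r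
        = (if r = r' then (1:k) else 0) • N r := by
    intro r; rw [← Finset.sum_smul, stmt3_aux1 P hP r r']
  simp only [key]
  simp [Finset.sum_ite_eq]

private lemma stmt3_slice {k : Type*} [Field k] {n e : ℕ} (A : (Fin (e + 2) → Fin n) → k)
    (P : Matrix (Fin n) (Fin n) k) (c : Fin e → Fin n) :
    Matrix.of (fun i j => ∑ idx : Fin (e + 2) → Fin n,
        A idx * ∏ t, P (idx t) (Fin.cons i (Fin.cons j c) t))
      = Pᵀ * (∑ r : Fin e → Fin n, (∏ s, P (r s) (c s)) •
          Matrix.of (fun a b => A (Fin.cons a (Fin.cons b r)))) * P := by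
  ext i j
  rw [Matrix.mul_apply]
  simp only [Matrix.mul_apply, Matrix.transpose_apply, Matrix.sum_apply, Matrix.smul_apply,
    Matrix.of_apply, smul_eq_mul]
  rw [← Equiv.sum_comp (Fin.consEquiv (fun _ : Fin (e+2) => Fin n))]
  rw [Fintype.sum_prod_type]
  have inner : ∀ a : Fin n,
      (∑ f : Fin (e+1) → Fin n,
        A ((Fin.consEquiv fun _ => Fin n) (a, f)) *
          ∏ t, P ((Fin.consEquiv fun _ => Fin n) (a, f) t)
            ((Fin.cons i (Fin.cons j c) : Fin (e+2) → Fin n) t))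
      = ∑ b : Fin n, ∑ r : Fin e → Fin n,
          A (Fin.cons a (Fin.cons b r)) * (P a i * (P b j * ∏ s, P (r s) (c s))) := by
    intro a
    rw [← Equiv.sum_comp (Fin.consEquiv (fun _ : Fin (e+1) => Fin n)), Fintype.sum_prod_type]
    simp only [Fin.consEquiv_apply, Fin.prod_univ_succ, Fin.cons_zero, Fin.cons_succ]
    rfl
  simp only [inner]
  rw [Finset.sum_comm]
  refine Finset.sum_congr rfl fun b _ => ?_
  rw [Finset.sum_mul]
  refine Finset.sum_congr rfl fun a _ => ?_
  rw [Finset.mul_sum, Finset.sum_mul]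
  refine Finset.sum_congr rfl fun r _ => ?_
  ring

private lemma stmt3_conj {k : Type*} [Field k] {n : ℕ}
    (P : Matrix (Fin n) (Fin n) k) (hP : IsUnit P)
    (S Y : Matrix (Fin n) (Fin n) k) :
    Yᵀ * (Pᵀ * S * P) = Pᵀ * S * P * Y ↔
      (P * Y * P⁻¹)ᵀ * S = S * (P * Y * P⁻¹) := by
  have hd := (Matrix.isUnit_iff_isUnit_det P).mp hP
  have h1 : P * P⁻¹ = 1 := Matrix.mul_nonsing_inv P hd
  have h2 : P⁻¹ * P = 1 := Matrix.nonsing_inv_mul P hd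
  have e1 : ∀ Z : Matrix (Fin n) (Fin n) k, P⁻¹ᵀ * (Pᵀ * Z) = Z := by
    intro Z
    rw [← Matrix.mul_assoc, ← Matrix.transpose_mul, h1, Matrix.transpose_one, Matrix.one_mul]
  have e2 : ∀ Z : Matrix (Fin n) (Fin n) k, Pᵀ * (P⁻¹ᵀ * Z) = Z := by
    intro Z
    rw [← Matrix.mul_assoc, ← Matrix.transpose_mul, h2, Matrix.transpose_one, Matrix.one_mul]
  constructor
  · intro h
    have h' := congrArg (fun Z => P⁻¹ᵀ * Z * P⁻¹) h
    simp only [Matrix.transpose_mul, Matrix.mul_assoc, h1, h2, e1, e2,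
      Matrix.mul_one, Matrix.one_mul] at h' ⊢
    exact h'
  · intro h
    have h' := congrArg (fun Z => Pᵀ * Z * P) h
    simp only [Matrix.transpose_mul, Matrix.mul_assoc, h1, h2, e1, e2,
      Matrix.mul_one, Matrix.one_mul] at h' ⊢
    exact h'

/-- Let `A` be a symmetric `d`-tensor (here `d = e + 2 ≥ 3`) of dimension `n`
over `k` and `P ∈ GL(n,k)`. Writing `Z(A) = {X : Xᵀ A^{(i₃⋯i_d)} = A^{(i₃⋯i_d)} X for all slices}`,
the center of the `d`-congruent tensor `AP^d` satisfies `Z(AP^d) = P⁻¹ Z(A) P`. -/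
theorem stmt_3 {k : Type*} [Field k] {n e : ℕ} (he : 1 ≤ e)
    (hchar : CharZero k ∨ ∃ p : ℕ, CharP k p ∧ e + 2 < p)
    (A : (Fin (e + 2) → Fin n) → k)
    (hA : ∀ (σ : Equiv.Perm (Fin (e + 2))) (idx : Fin (e + 2) → Fin n), A (idx ∘ σ) = A idx)
    (P : Matrix (Fin n) (Fin n) k) (hP : IsUnit P) :
    let B : (Fin (e + 2) → Fin n) → k :=
      fun jdx => ∑ idx : Fin (e + 2) → Fin n, A idx * ∏ t, P (idx t) (jdx t)
    {Y : Matrix (Fin n) (Fin n) k | ∀ c : Fin e → Fin n,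
        Yᵀ * Matrix.of (fun i j => B (Fin.cons i (Fin.cons j c)))
          = Matrix.of (fun i j => B (Fin.cons i (Fin.cons j c))) * Y}
      = (fun X => P⁻¹ * X * P) ''
          {X : Matrix (Fin n) (Fin n) k | ∀ c : Fin e → Fin n,
            Xᵀ * Matrix.of (fun i j => A (Fin.cons i (Fin.cons j c)))
              = Matrix.of (fun i j => A (Fin.cons i (Fin.cons j c))) * X} := by
  intro B
  have hd := (Matrix.isUnit_iff_isUnit_det P).mp hP
  have h1 : P * P⁻¹ = 1 := Matrix.mul_nonsing_inv P hd
  have h2 : P⁻¹ * P = 1 := Matrix.nonsing_inv_mul P hd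
  set M : (Fin e → Fin n) → Matrix (Fin n) (Fin n) k :=
    fun r => Matrix.of (fun a b => A (Fin.cons a (Fin.cons b r))) with hM
  set S : (Fin e → Fin n) → Matrix (Fin n) (Fin n) k :=
    fun c => ∑ r : Fin e → Fin n, (∏ s, P (r s) (c s)) • M r with hS
  have hslice : ∀ c : Fin e → Fin n,
      Matrix.of (fun i j => B (Fin.cons i (Fin.cons j c))) = Pᵀ * S c * P :=
    fun c => stmt3_slice A P c
  -- equivalence between commuting with all S c and all M r
  have hMS : ∀ X : Matrix (Fin n) (Fin n) k,
      (∀ c, Xᵀ * S c = S c * X) ↔ (∀ r, Xᵀ * M r = M r * X) := by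
    intro X
    constructor
    · intro h r
      have hrec := stmt3_recover P hP (fun c => Xᵀ * S c) r
      have hrec' := stmt3_recover P hP (fun c => S c * X) r
      have hMr : M r = ∑ c : Fin e → Fin n, (∏ s, P⁻¹ (c s) (r s)) • S c :=
        (stmt3_recover P hP M r).symm
      calc Xᵀ * M r = ∑ c : Fin e → Fin n, (∏ s, P⁻¹ (c s) (r s)) • (Xᵀ * S c) := by
            rw [hMr, Matrix.mul_sum]; simp [Matrix.mul_smul]
        _ = ∑ c : Fin e → Fin n, (∏ s, P⁻¹ (c s) (r s)) • (S c * X) := by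
            simp only [h]
        _ = M r * X := by
            rw [hMr, Matrix.sum_mul]; simp [Matrix.smul_mul]
    · intro h c
      calc Xᵀ * S c = ∑ r : Fin e → Fin n, (∏ s, P (r s) (c s)) • (Xᵀ * M r) := by
            rw [hS, Matrix.mul_sum]; simp [Matrix.mul_smul]
        _ = ∑ r : Fin e → Fin n, (∏ s, P (r s) (c s)) • (M r * X) := by
            simp only [h]
        _ = S c * X := by
            rw [hS, Matrix.sum_mul]; simp [Matrix.smul_mul]
  ext Y
  simp only [Set.mem_setOf_eq, Set.mem_image, hslice]
  constructor
  · intro hY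
    refine ⟨P * Y * P⁻¹, ?_, ?_⟩
    · exact (hMS (P * Y * P⁻¹)).mp fun c => (stmt3_conj P hP (S c) Y).mp (hY c)
    · calc P⁻¹ * (P * Y * P⁻¹) * P = (P⁻¹ * P) * Y * (P⁻¹ * P) := by
            simp only [Matrix.mul_assoc]
        _ = Y := by rw [h2, Matrix.one_mul, Matrix.mul_one]
  · rintro ⟨X, hX, rfl⟩
    intro c
    have hXY : P * (P⁻¹ * X * P) * P⁻¹ = X := by
      calc P * (P⁻¹ * X * P) * P⁻¹ = (P * P⁻¹) * X * (P * P⁻¹) := by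
            simp only [Matrix.mul_assoc]
        _ = X := by rw [h1, Matrix.one_mul, Matrix.mul_one]
    refine (stmt3_conj P hP (S c) (P⁻¹ * X * P)).mpr ?_
    rw [hXY]
    exact (hMS X).mpr hX c
end

section
/- Let f ∈ k[x₁,…,xₙ] be a homogeneous polynomial of degree d with symmetric d-tensor A = (a_{i₁⋯i_d}) (so f = Σ a_{i₁⋯i_d} x_{i₁}⋯x_{i_d} with symmetric coefficients) and associated symmetric d-multilinear form Θ on kⁿ, and set r = n − dim ker Θ. Then there exists P ∈ GL(n,k) such that the polynomial g(y) = f(Py) involves only r of the variables y₁,…,yₙ, and for every Q ∈ GL(n,k) the polynomial f(Qy) involves at least r of the variables; that is, the essential number of variables of f equals n − dim ker Θ. -/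
/-!
Write `f = ∑ Θ(e_{i₁}, …, e_{i_d}) x_{i₁} ⋯ x_{i_d}`. Substituting `x = P y` replaces `Θ` by
`Θ ∘ P`, so a term of `f(Py)` survives only if no `P e_{i_t}` lies in the radical
`ker Θ = ker (u ↦ Θ(u, ·))`: taking for `P` a basis of `kⁿ` whose last `dim ker Θ` vectors span
the radical leaves only `n - dim ker Θ` variables. Conversely, by symmetry the coefficient of a
monomial in `f(Qy)` is the corresponding value of `Θ ∘ Q` times the number of index tuples
producing that monomial; this number is an orbit size of the symmetric group, so it divides `d!`
and is invertible in `k`. Hence if `y_j` does not occur in `f(Qy)`, then `Q e_j` lies in the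
radical, and these columns of `Q` are linearly independent.
-/

open MvPolynomial Finset

section MonomialExponent

variable {α ι : Type*} [Fintype α]

noncomputable def monomialExponent (idx : α → ι) : ι →₀ ℕ := ∑ a, Finsupp.single (idx a) 1

lemma monomialExponent_apply [DecidableEq ι] (idx : α → ι) (i : ι) :
    monomialExponent idx i = #{a | idx a = i} := by
  simp [monomialExponent, Finsupp.finsetSum_apply, Finsupp.single_apply, Finset.sum_boole]

lemma mem_support_monomialExponent [DecidableEq ι] {idx : α → ι} {i : ι} :
    i ∈ (monomialExponent idx).support ↔ ∃ a, idx a = i := by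
  simp [monomialExponent_apply]

lemma monomialExponent_comp_perm (idx : α → ι) (τ : Equiv.Perm α) :
    monomialExponent (idx ∘ τ) = monomialExponent idx :=
  Equiv.sum_comp τ fun a => Finsupp.single (idx a) 1

lemma exists_perm_of_monomialExponent_eq [DecidableEq ι] {idx idx' : α → ι}
    (h : monomialExponent idx = monomialExponent idx') :
    ∃ τ : Equiv.Perm α, idx' = idx ∘ τ := by
  have hcard (i : ι) : Fintype.card {a // idx' a = i} = Fintype.card {a // idx a = i} := by
    simpa [monomialExponent_apply, Fintype.card_subtype] using congr($h.symm i)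
  let τ := Equiv.ofFiberEquiv fun i => Fintype.equivOfCardEq (hcard i)
  exact ⟨τ, funext fun a => (Equiv.ofFiberEquiv_map _ a).symm⟩

lemma card_monomialExponent_fiber_dvd [DecidableEq α] [DecidableEq ι] [Fintype ι]
    (idx : α → ι) :
    #{idx' : α → ι | monomialExponent idx' = monomialExponent idx} ∣
      (Fintype.card α).factorial := by
  have horbit : MulAction.orbit (Equiv.Perm α)ᵈᵐᵃ idx =
      {idx' | monomialExponent idx' = monomialExponent idx} := by
    ext idx'
    constructor
    · rintro ⟨τ, rfl⟩
      exact monomialExponent_comp_perm idx _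
    · intro h
      obtain ⟨τ, rfl⟩ := exists_perm_of_monomialExponent_eq h.symm
      exact ⟨DomMulAct.mk τ, rfl⟩
  rw [← Fintype.card_perm, ← Nat.card_eq_fintype_card, ← Set.ncard_coe_finset, coe_filter_univ,
    ← horbit, ← MulAction.index_stabilizer, Nat.card_congr DomMulAct.mk]
  exact Subgroup.index_dvd_card _

lemma prod_X_eq_monomial_monomialExponent {R : Type*} [CommSemiring R] (idx : α → ι) :
    ∏ a, (X (idx a) : MvPolynomial ι R) = monomial (monomialExponent idx) 1 := by
  simp [monomialExponent, monomial_sum_one, X]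

end MonomialExponent

lemma Nat.cast_factorial_ne_zero_of_lt_char {k : Type*} [Field k] {d : ℕ}
    (h : CharZero k ∨ ∃ p : ℕ, CharP k p ∧ d < p) : (d.factorial : k) ≠ 0 := by
  rcases h with h | ⟨p, hp, hdp⟩
  · exact Nat.cast_ne_zero.mpr d.factorial_ne_zero
  · have hprime : p.Prime := (CharP.char_is_prime_or_zero k p).resolve_right (by omega)
    rw [Ne, CharP.cast_eq_zero_iff k p, hprime.dvd_factorial]
    omega

lemma Submodule.exists_isUnit_mulVec_single_mem {k : Type*} [Field k] {n : ℕ}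
    (K : Submodule k (Fin n → k)) :
    ∃ P : Matrix (Fin n) (Fin n) k, IsUnit P ∧ ∃ S : Finset (Fin n),
      #S = n - Module.finrank k K ∧ ∀ j ∉ S, P.mulVec (Pi.single j 1) ∈ K := by
  obtain ⟨W, hW⟩ := K.exists_isCompl
  have hrank : Module.finrank k W + Module.finrank k K = n := by
    rw [Submodule.finrank_add_eq_of_isCompl hW.symm, Module.finrank_fin_fun]
  let eqv := finSumFinEquiv.trans (finCongr hrank)
  let b : Module.Basis (Fin n) k (Fin n → k) :=
    (((Module.finBasis k W).prod (Module.finBasis k K)).map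
      (Submodule.prodEquivOfIsCompl W K hW.symm)).reindex eqv
  refine ⟨Matrix.of fun i j => b j i,
    Matrix.linearIndependent_cols_iff_isUnit.mp b.linearIndependent,
    univ.image fun i => eqv (Sum.inl i), ?_, fun j hj => ?_⟩
  · rw [card_image_of_injective (f := fun i => eqv (Sum.inl i)) _
      (eqv.injective.comp Sum.inl_injective), card_univ, Fintype.card_fin]
    omega
  rw [Matrix.mulVec_single_one]
  show b j ∈ K
  rcases hij : eqv.symm j with i | i
  · exact absurd (mem_image.mpr ⟨i, mem_univ _, by rw [← hij, Equiv.apply_symm_apply]⟩) hj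
  · rw [← eqv.apply_symm_apply j, hij]
    simp [b, Module.Basis.prod_apply]

namespace MultilinearMap

section Symmetric

variable {R : Type*} [CommRing R] {ι M M' N : Type*} [AddCommGroup M] [Module R M]
  [AddCommGroup M'] [Module R M'] [AddCommGroup N] [Module R N]

def IsSymmetric (Θ : MultilinearMap R (fun _ : ι => M) N) : Prop :=
  ∀ (τ : Equiv.Perm ι) (v : ι → M), Θ (v ∘ τ) = Θ v

lemma IsSymmetric.compLinearMap {Θ : MultilinearMap R (fun _ : ι => M) N}
    (hΘ : Θ.IsSymmetric) (g : M' →ₗ[R] M) : (Θ.compLinearMap fun _ => g).IsSymmetric :=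
  fun τ v => hΘ τ (g ∘ v)

lemma isSymmetric_of_apply_single [Finite ι] {σ : Type*} [Fintype σ] [DecidableEq σ]
    (Θ : MultilinearMap R (fun _ : ι => σ → R) N)
    (h : ∀ (τ : Equiv.Perm ι) (idx : ι → σ),
      Θ (fun t => Pi.single (idx (τ t)) 1) = Θ (fun t => Pi.single (idx t) 1)) :
    Θ.IsSymmetric := by
  intro τ v
  have : Θ.domDomCongr τ = Θ :=
    Module.Basis.ext_multilinear (fun _ => Pi.basisFun R σ) fun idx => by
      simpa using h τ idx
  exact congr($this v)

end Symmetric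

section Form

variable {R : Type*} [CommRing R] {ι σ : Type*} [Fintype ι] [DecidableEq ι] [Fintype σ]
  [DecidableEq σ] (Θ : MultilinearMap R (fun _ : ι => σ → R) R)

noncomputable def toForm : MvPolynomial σ R :=
  ∑ idx : ι → σ, C (Θ fun t => Pi.single (idx t) 1) * ∏ t, X (idx t)

lemma toForm_eq_sum_monomial :
    Θ.toForm =
      ∑ idx : ι → σ, monomial (monomialExponent idx) (Θ fun t => Pi.single (idx t) 1) := by
  simp only [toForm, prod_X_eq_monomial_monomialExponent, C_mul_monomial, mul_one]

lemma vars_toForm_subset {S : Finset σ}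
    (h : ∀ (idx : ι → σ) (t : ι), idx t ∉ S → Θ (fun t => Pi.single (idx t) 1) = 0) :
    Θ.toForm.vars ⊆ S := by
  rw [toForm_eq_sum_monomial]
  refine (vars_sum_subset _ _).trans (biUnion_subset.mpr fun idx _ => ?_)
  by_cases hc : Θ (fun t => Pi.single (idx t) 1) = 0
  · simp [hc]
  intro i hi
  rw [vars_monomial hc] at hi
  obtain ⟨t, rfl⟩ := mem_support_monomialExponent.mp hi
  by_contra hS
  exact hc (h idx t hS)

lemma aeval_toForm (M : Matrix σ σ R) :
    aeval (fun i => ∑ j, C (M i j) * X j : σ → MvPolynomial σ R) Θ.toForm =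
      (Θ.compLinearMap fun _ => Matrix.toLin' M).toForm := by
  have hcol (j : σ) : Matrix.toLin' M (Pi.single j 1) = ∑ i, M i j • Pi.single i 1 := by
    ext i'
    simp [Pi.single_apply]
  have hcoeff (jdx : ι → σ) :
      (Θ.compLinearMap fun _ => Matrix.toLin' M) (fun t => Pi.single (jdx t) 1) =
        ∑ idx : ι → σ, (Θ fun t => Pi.single (idx t) 1) * ∏ t, M (idx t) (jdx t) := by
    simp only [compLinearMap_apply, hcol, map_sum, map_smul_univ, smul_eq_mul, mul_comm]
  simp only [toForm, hcoeff, _root_.map_sum, map_mul, map_prod, aeval_C, aeval_X, algebraMap_eq,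
    prod_univ_sum, Fintype.piFinset_univ, mul_sum, sum_mul]
  rw [sum_comm]
  refine sum_congr rfl fun jdx _ => sum_congr rfl fun idx _ => ?_
  rw [prod_mul_distrib, ← map_prod]
  ring

variable {Θ}

lemma IsSymmetric.coeff_toForm (hΘ : Θ.IsSymmetric) (idx : ι → σ) :
    coeff (monomialExponent idx) Θ.toForm =
      #{idx' : ι → σ | monomialExponent idx' = monomialExponent idx} *
        Θ (fun t => Pi.single (idx t) 1) := by
  rw [toForm_eq_sum_monomial, coeff_sum]
  simp only [coeff_monomial]
  rw [← sum_filter, ← nsmul_eq_mul, ← sum_const]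
  refine sum_congr rfl fun idx' hidx' => ?_
  obtain ⟨τ, rfl⟩ := exists_perm_of_monomialExponent_eq (mem_filter.mp hidx').2.symm
  exact hΘ τ (fun t => Pi.single (idx t) 1)

lemma IsSymmetric.apply_single_eq_zero_of_notMem_vars (hΘ : Θ.IsSymmetric)
    (hfac : IsUnit ((Fintype.card ι).factorial : R)) {idx : ι → σ} {t : ι}
    (ht : idx t ∉ Θ.toForm.vars) : Θ (fun t => Pi.single (idx t) 1) = 0 := by
  have hcoeff : coeff (monomialExponent idx) Θ.toForm = 0 := by
    by_contra hne
    exact ht <| (mem_vars_iff_mem_support _).mpr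
      ⟨_, mem_support_iff.mpr hne, mem_support_monomialExponent.mpr ⟨t, rfl⟩⟩
  have hunit : IsUnit (#{idx' : ι → σ | monomialExponent idx' = monomialExponent idx} : R) :=
    isUnit_of_dvd_unit (Nat.cast_dvd_cast (card_monomialExponent_fiber_dvd idx)) hfac
  rwa [hΘ.coeff_toForm, hunit.mul_right_eq_zero] at hcoeff

end Form

section Radical

variable {R : Type*} [CommRing R] {M M' N : Type*} [AddCommGroup M] [Module R M]
  [AddCommGroup M'] [Module R M'] [AddCommGroup N] [Module R N] {m : ℕ}
  (Θ : MultilinearMap R (fun _ : Fin (m + 1) => M) N)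

lemma curryLeft_eq_zero_iff {u : M} :
    Θ.curryLeft u = 0 ↔ ∀ v : Fin (m + 1) → M, Θ (Function.update v 0 u) = 0 := by
  refine ⟨fun h v => ?_, fun h => ext fun v => ?_⟩
  · rw [← Fin.cons_self_tail v, Fin.update_cons_zero, ← curryLeft_apply, h, zero_apply]
  · simpa [Fin.update_cons_zero] using h (Fin.cons u v)

lemma ker_curryLeft_compLinearMap {g : M' →ₗ[R] M} (hg : Function.Surjective g) :
    LinearMap.ker (Θ.compLinearMap fun _ => g).curryLeft =
      (LinearMap.ker Θ.curryLeft).comap g := by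
  ext u
  have hcurry : (Θ.compLinearMap fun _ => g).curryLeft u =
      (Θ.curryLeft (g u)).compLinearMap fun _ => g := by
    ext v
    simp only [curryLeft_apply, compLinearMap_apply]
    congr 1
    exact Fin.comp_cons g u v
  rw [LinearMap.mem_ker, hcurry, Submodule.mem_comap, LinearMap.mem_ker,
    (compLinearMap_injective _ fun _ => hg).eq_iff' (zero_compLinearMap _)]

lemma finrank_ker_curryLeft_compLinearEquiv (e : M' ≃ₗ[R] M) :
    Module.finrank R (LinearMap.ker (Θ.compLinearMap fun _ => (e : M' →ₗ[R] M)).curryLeft) =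
      Module.finrank R (LinearMap.ker Θ.curryLeft) := by
  rw [ker_curryLeft_compLinearMap Θ e.surjective, Submodule.comap_equiv_eq_map_symm,
    LinearEquiv.finrank_map_eq]

variable {Θ}

lemma IsSymmetric.apply_eq_zero_of_mem_ker_curryLeft (hΘ : Θ.IsSymmetric)
    {v : Fin (m + 1) → M} {t : Fin (m + 1)} (ht : v t ∈ LinearMap.ker Θ.curryLeft) :
    Θ v = 0 := by
  rw [← hΘ (Equiv.swap 0 t) v, ← Fin.cons_self_tail (v ∘ Equiv.swap 0 t), ← curryLeft_apply]
  simpa using congr($(LinearMap.mem_ker.mp ht) (Fin.tail (v ∘ Equiv.swap 0 t)))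

end Radical

section Field

variable {k σ : Type*} [Field k] [Fintype σ] [DecidableEq σ] {m : ℕ}
  {Θ : MultilinearMap k (fun _ : Fin (m + 1) => σ → k) k}

lemma IsSymmetric.single_mem_ker_curryLeft_of_notMem_vars (hΘ : Θ.IsSymmetric)
    (hfac : ((m + 1).factorial : k) ≠ 0) {j : σ} (hj : j ∉ Θ.toForm.vars) :
    Pi.single j 1 ∈ LinearMap.ker Θ.curryLeft := by
  refine LinearMap.mem_ker.mpr <|
    Module.Basis.ext_multilinear (fun _ => Pi.basisFun k σ) fun idx => ?_
  simp only [Pi.basisFun_apply, curryLeft_apply, zero_apply]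
  have hcons := hΘ.apply_single_eq_zero_of_notMem_vars (idx := Fin.cons j idx) (t := 0)
    (by rwa [Fintype.card_fin, isUnit_iff_ne_zero]) hj
  convert hcons using 2
  ext t : 1
  cases t using Fin.cases <;> simp

lemma IsSymmetric.card_sub_finrank_ker_curryLeft_le_card_vars (hΘ : Θ.IsSymmetric)
    (hfac : ((m + 1).factorial : k) ≠ 0) :
    Fintype.card σ - Module.finrank k (LinearMap.ker Θ.curryLeft) ≤ #Θ.toForm.vars := by
  have hli : LinearIndependent k fun j : ↥Θ.toForm.varsᶜ =>
      (⟨Pi.single (j : σ) 1, hΘ.single_mem_ker_curryLeft_of_notMem_vars hfac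
        (mem_compl.mp j.2)⟩ : LinearMap.ker Θ.curryLeft) := by
    apply LinearIndependent.of_comp (LinearMap.ker Θ.curryLeft).subtype
    exact (Pi.linearIndependent_single_one σ k).comp _ Subtype.val_injective
  have hcard := hli.fintype_card_le_finrank
  rw [Fintype.card_coe, card_compl] at hcard
  omega

end Field

end MultilinearMap

theorem stmt_5_general {k : Type*} [Field k] {n e : ℕ}
    (hchar : CharZero k ∨ ∃ p : ℕ, CharP k p ∧ e + 2 < p)
    (A : (Fin (e + 2) → Fin n) → k)
    (hA : ∀ (σ : Equiv.Perm (Fin (e + 2))) (idx : Fin (e + 2) → Fin n), A (idx ∘ σ) = A idx)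
    (Θ : MultilinearMap k (fun _ : Fin (e + 2) => (Fin n → k)) k)
    (hΘ : ∀ idx : Fin (e + 2) → Fin n, Θ (fun t => Pi.single (idx t) (1 : k)) = A idx)
    (K : Submodule k (Fin n → k))
    (hK : ∀ u : Fin n → k,
      u ∈ K ↔ ∀ v : Fin (e + 2) → (Fin n → k), Θ (Function.update v 0 u) = 0) :
    let f : MvPolynomial (Fin n) k :=
      ∑ idx : Fin (e + 2) → Fin n, C (A idx) * ∏ t, X (idx t)
    let r : ℕ := n - Module.finrank k ↥K
    (∃ P : Matrix (Fin n) (Fin n) k, IsUnit P ∧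
        ∃ S : Finset (Fin n), S.card = r ∧
          (aeval (fun i => ∑ j, C (P i j) * X j : Fin n → MvPolynomial (Fin n) k) f).vars ⊆ S) ∧
    (∀ Q : Matrix (Fin n) (Fin n) k, IsUnit Q →
        r ≤ (aeval (fun i => ∑ j, C (Q i j) * X j : Fin n → MvPolynomial (Fin n) k) f).vars.card) := by
  intro f r
  have hf : f = Θ.toForm := by simp only [f, MultilinearMap.toForm, hΘ]
  have hsymm : Θ.IsSymmetric := Θ.isSymmetric_of_apply_single fun τ idx => by
    rw [hΘ, hΘ]
    exact hA τ idx
  obtain rfl : K = LinearMap.ker Θ.curryLeft := by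
    ext u
    rw [hK, LinearMap.mem_ker, MultilinearMap.curryLeft_eq_zero_iff]
  rw [hf]
  refine ⟨?_, fun Q hQ => ?_⟩
  · obtain ⟨P, hP, S, hS, hPS⟩ := (LinearMap.ker Θ.curryLeft).exists_isUnit_mulVec_single_mem
    refine ⟨P, hP, S, hS, ?_⟩
    rw [MultilinearMap.aeval_toForm]
    exact MultilinearMap.vars_toForm_subset _ fun idx t ht =>
      hsymm.apply_eq_zero_of_mem_ker_curryLeft (t := t) (hPS _ ht)
  · have hrank : Module.finrank k
        (LinearMap.ker (Θ.compLinearMap fun _ => Matrix.toLin' Q).curryLeft) =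
          Module.finrank k (LinearMap.ker Θ.curryLeft) :=
      Θ.finrank_ker_curryLeft_compLinearEquiv (Q.toLinearEquiv' hQ.invertible)
    have hvars := MultilinearMap.IsSymmetric.card_sub_finrank_ker_curryLeft_le_card_vars
      (hsymm.compLinearMap (Matrix.toLin' Q)) (Nat.cast_factorial_ne_zero_of_lt_char hchar)
    rw [Fintype.card_fin, hrank] at hvars
    rwa [MultilinearMap.aeval_toForm]

/-- Let `f` be the degree-`d` form (here `d = e + 2 ≥ 3`) with symmetric
`d`-tensor `A` and associated symmetric multilinear form `Θ` on `kⁿ`, and set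
`r = n − dim ker Θ`. Then there exists `P ∈ GL(n,k)` such that `f(Py)` involves only `r`
of the variables, and for every `Q ∈ GL(n,k)` the polynomial `f(Qy)` involves at least `r`
variables; i.e. the essential number of variables of `f` equals `n − dim ker Θ`. -/
theorem stmt_5 {k : Type*} [Field k] {n e : ℕ} (he : 1 ≤ e)
    (hchar : CharZero k ∨ ∃ p : ℕ, CharP k p ∧ e + 2 < p)
    (A : (Fin (e + 2) → Fin n) → k)
    (hA : ∀ (σ : Equiv.Perm (Fin (e + 2))) (idx : Fin (e + 2) → Fin n), A (idx ∘ σ) = A idx)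
    (Θ : MultilinearMap k (fun _ : Fin (e + 2) => (Fin n → k)) k)
    (hΘ : ∀ idx : Fin (e + 2) → Fin n, Θ (fun t => Pi.single (idx t) (1 : k)) = A idx)
    (K : Submodule k (Fin n → k))
    (hK : ∀ u : Fin n → k,
      u ∈ K ↔ ∀ v : Fin (e + 2) → (Fin n → k), Θ (Function.update v 0 u) = 0) :
    let f : MvPolynomial (Fin n) k :=
      ∑ idx : Fin (e + 2) → Fin n, C (A idx) * ∏ t, X (idx t)
    let r : ℕ := n - Module.finrank k ↥K
    (∃ P : Matrix (Fin n) (Fin n) k, IsUnit P ∧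
        ∃ S : Finset (Fin n), S.card = r ∧
          (aeval (fun i => ∑ j, C (P i j) * X j : Fin n → MvPolynomial (Fin n) k) f).vars ⊆ S) ∧
    (∀ Q : Matrix (Fin n) (Fin n) k, IsUnit Q →
        r ≤ (aeval (fun i => ∑ j, C (Q i j) * X j : Fin n → MvPolynomial (Fin n) k) f).vars.card) :=
  stmt_5_general hchar A hA Θ hΘ K hK
end

section
/- Let Θ be a nondegenerate symmetric d-multilinear form on an n-dimensional k-vector space V. Then (V,Θ) is diagonalizable, i.e. there exists a basis β₁, …, βₙ of V with Θ(β_{j₁}, …, β_{j_d}) = 0 unless j₁ = ⋯ = j_d, if and only if the center Z(V,Θ) is isomorphic as a k-algebra to the product k × ⋯ × k of n copies of k. -/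
/-!
If `β` is a diagonal basis, nondegeneracy forces `Θ(βᵢ, …, βᵢ) ≠ 0`. Comparing a central `φ`
acting on the first slot of `(βⱼ, βᵢ, βᵢ, …)` with `φ` acting on the second slot, only the
`βᵢ`-coefficient of `φ βⱼ` survives on the left while everything vanishes on the right (the
tuple keeps both `βⱼ` and `βᵢ`), so central operators are diagonal in `β`; conversely
operators diagonal in `β` are central, since centrality can be tested on basis tuples. Hence the
center is the algebra of `β`-diagonal operators, which is `kⁿ`.

Conversely, an isomorphism of the center with `kⁿ` pulls the coordinate idempotents back to
central orthogonal idempotents `eᵢ`. Nonzero vectors `bᵢ ∈ im eᵢ` are linearly independent,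
hence a basis by counting dimensions, and if `jₛ ≠ jₜ` then moving `e_{jₛ}` from slot `s`, where
it fixes `b_{jₛ}`, to slot `t`, where it kills `b_{jₜ}`, shows `Θ(b_{j₁}, …, b_{j_d}) = 0`.
-/

open Function Module

section LinearIndependent

variable {k V ι : Type*} [Field k] [AddCommGroup V] [Module k V] [Fintype ι]

theorem OrthogonalIdempotents.linearIndependent_apply {p : ι → Module.End k V}
    (hp : OrthogonalIdempotents p) {x : ι → V} (hx : ∀ i, p i (x i) ≠ 0) :
    LinearIndependent k fun i => p i (x i) := by
  rw [Fintype.linearIndependent_iff]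
  intro g hg j
  have hj : p j (∑ i, g i • p i (x i)) = g j • p j (x j) := by
    rw [map_sum, Finset.sum_eq_single j]
    · rw [map_smul, ← Module.End.mul_apply, (hp.idem j).eq]
    · intro i _ hij
      rw [map_smul, ← Module.End.mul_apply, hp.ortho hij.symm, LinearMap.zero_apply, smul_zero]
    · simp
  rw [hg, LinearMap.map_zero, eq_comm, smul_eq_zero] at hj
  exact hj.resolve_right (hx j)

end LinearIndependent

theorem Subalgebra.nonempty_algEquiv_iff_exists_bijOn {R A B : Type*} [CommSemiring R]
    [Semiring A] [Algebra R A] [Semiring B] [Algebra R B] (S : Subalgebra R A) :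
    Nonempty (S ≃ₐ[R] B) ↔ ∃ F : A → B, Set.BijOn F S Set.univ ∧
      (∀ x ∈ S, ∀ y ∈ S, F (x + y) = F x + F y) ∧ (∀ c : R, ∀ x ∈ S, F (c • x) = c • F x) ∧
      (∀ x ∈ S, ∀ y ∈ S, F (x * y) = F x * F y) ∧ F 1 = 1 := by
  classical
  constructor
  · rintro ⟨e⟩
    let F : A → B := fun x => if h : x ∈ S then e ⟨x, h⟩ else 0
    have hF : ∀ x (hx : x ∈ S), F x = e ⟨x, hx⟩ := fun x hx => dif_pos hx
    refine ⟨F, ⟨fun _ _ => Set.mem_univ _, fun x hx y hy h => ?_,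
      fun y _ => ⟨e.symm y, (e.symm y).2, ?_⟩⟩, ?_, ?_, ?_, ?_⟩
    · rw [hF x hx, hF y hy] at h
      exact congr_arg Subtype.val (e.injective h)
    · rw [hF _ (e.symm y).2]
      exact e.apply_symm_apply y
    · intro x hx y hy
      rw [hF x hx, hF y hy, hF _ (S.add_mem hx hy), ← map_add]
      rfl
    · intro c x hx
      rw [hF x hx, hF _ (S.smul_mem hx c), ← map_smul]
      rfl
    · intro x hx y hy
      rw [hF x hx, hF y hy, hF _ (S.mul_mem hx hy), ← map_mul]
      rfl
    · rw [hF 1 S.one_mem]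
      exact map_one e
  · rintro ⟨F, hbij, hadd, hsmul, hmul, hone⟩
    let f : S →ₗ[R] B :=
      { toFun := fun x => F x
        map_add' := fun x y => hadd x x.2 y y.2
        map_smul' := fun c x => hsmul c x x.2 }
    refine ⟨AlgEquiv.ofBijective (AlgHom.ofLinearMap f hone fun x y => hmul x x.2 y y.2)
      ⟨fun x y h => Subtype.ext (hbij.injOn x.2 y.2 h), fun y => ?_⟩⟩
    obtain ⟨x, hx, rfl⟩ := hbij.surjOn (Set.mem_univ y)
    exact ⟨⟨x, hx⟩, rfl⟩

namespace Module.Basis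

variable {R V ι : Type*} [CommSemiring R] [AddCommMonoid V] [Module R V] [Fintype ι]
  [DecidableEq ι] (β : Basis ι R V)

noncomputable def diagonalEnd : (ι → R) →ₐ[R] Module.End R V :=
  (Matrix.toLinAlgEquiv β).toAlgHom.comp (Matrix.diagonalAlgHom R)

theorem diagonalEnd_apply_self (μ : ι → R) (i : ι) : β.diagonalEnd μ (β i) = μ i • β i := by
  change Matrix.toLinAlgEquiv β (Matrix.diagonal μ) (β i) = _
  simp [Matrix.toLinAlgEquiv_apply, Matrix.mulVec_diagonal, Finsupp.single_apply]

theorem diagonalEnd_injective : Function.Injective β.diagonalEnd :=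
  (Matrix.toLinAlgEquiv β).injective.comp Matrix.diagonal_injective

end Module.Basis

namespace MultilinearMap

section Center

variable {R V N : Type*} [CommSemiring R] [AddCommMonoid V] [Module R V] [AddCommMonoid N]
  [Module R N] {d : ℕ} (Θ : MultilinearMap R (fun _ : Fin d => V) N)

def IsCentral (φ : Module.End R V) : Prop :=
  ∀ (v : Fin d → V) (i j : Fin d), Θ (update v i (φ (v i))) = Θ (update v j (φ (v j)))

variable {Θ} {φ ψ : Module.End R V}

theorem isCentral_iff_of_perm_invariant
    (hsymm : ∀ (σ : Equiv.Perm (Fin d)) (v : Fin d → V), Θ (v ∘ σ) = Θ v)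
    {i j : Fin d} (hij : i ≠ j) :
    IsCentral Θ φ ↔ ∀ v : Fin d → V, Θ (update v i (φ (v i))) = Θ (update v j (φ (v j))) := by
  refine ⟨fun hφ v => hφ v i j, fun h v a b => ?_⟩
  rcases eq_or_ne a b with rfl | hab
  · rfl
  -- a permutation `σ` with `σ i = a` and `σ j = b` transports the slots `i, j` to `a, b`
  set τ := Equiv.swap i a
  set σ := τ * Equiv.swap j (τ b)
  have hτb : τ b ≠ i := fun h => hab (by
    rw [Equiv.swap_apply_eq_iff, Equiv.swap_apply_left] at h; exact h.symm)
  have hσi : σ i = a := by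
    simp [σ, Equiv.swap_apply_of_ne_of_ne hij hτb.symm, τ]
  have hσj : σ j = b := by simp [σ, τ, Equiv.swap_apply_self]
  have hperm : ∀ (c : Fin d) (x : V), Θ (update (v ∘ σ) c x) = Θ (update v (σ c) x) := by
    intro c x
    rw [← hsymm σ (update v (σ c) x), update_comp_equiv, Equiv.symm_apply_apply]
  simpa [hperm, hσi, hσj] using h (v ∘ σ)

theorem IsCentral.add (hφ : IsCentral Θ φ) (hψ : IsCentral Θ ψ) : IsCentral Θ (φ + ψ) := by
  intro v i j
  rw [LinearMap.add_apply, LinearMap.add_apply, Θ.map_update_add, Θ.map_update_add, hφ v i j,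
    hψ v i j]

theorem isCentral_algebraMap (r : R) : IsCentral Θ (algebraMap R (Module.End R V) r) := by
  intro v i j
  simp only [Module.algebraMap_end_apply, Θ.map_update_smul, update_eq_self]

theorem IsCentral.mul (hd : 3 ≤ d) (hφ : IsCentral Θ φ) (hψ : IsCentral Θ ψ) :
    IsCentral Θ (φ * ψ) := by
  intro v i j
  rcases eq_or_ne i j with rfl | hij
  · rfl
  -- move `φ` out of the way into a third slot `l`, then `ψ` from `i` to `j`, then `φ` back
  obtain ⟨l, hli, hlj⟩ := Fin.exists_ne_and_ne_of_two_lt i j (by omega)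
  calc Θ (update v i ((φ * ψ) (v i)))
      = Θ (update (update v l (φ (v l))) i (ψ (v i))) := by
        simpa [update_of_ne hli, update_comm hli] using hφ (update v i (ψ (v i))) i l
    _ = Θ (update (update v l (φ (v l))) j (ψ (v j))) := by
        simpa [update_of_ne hli.symm, update_of_ne hlj.symm] using
          hψ (update v l (φ (v l))) i j
    _ = Θ (update v j ((φ * ψ) (v j))) := by
        simpa [update_of_ne hlj, update_comm hlj] using hφ (update v j (ψ (v j))) l j

theorem isCentral_of_forall_basis {ι : Type*} (β : Basis ι R V)
    (h : ∀ (j : Fin d → ι) (s t : Fin d),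
      Θ (update (β ∘ j) s (φ (β (j s)))) = Θ (update (β ∘ j) t (φ (β (j t))))) :
    IsCentral Θ φ := by
  -- both sides are multilinear in `v`, so they agree once they agree on basis vectors
  have key : ∀ (r : Fin d) (v : Fin d → V),
      Θ (update v r (φ (v r))) = Θ.compLinearMap (update (fun _ => LinearMap.id) r φ) v := by
    intro r v
    rw [compLinearMap_apply]
    congr 1
    funext q
    rcases eq_or_ne q r with rfl | hq <;> simp [update_of_ne, *]
  intro v s t
  rw [key, key, Basis.ext_multilinear (fun _ => β)
    (f := Θ.compLinearMap (update (fun _ => LinearMap.id) s φ))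
    (g := Θ.compLinearMap (update (fun _ => LinearMap.id) t φ))
    fun j => by rw [← key, ← key]; exact h j s t]

theorem IsCentral.map_eq_zero (hφ : IsCentral Θ φ) {v : Fin d → V} {s t : Fin d}
    (hs : φ (v s) = v s) (ht : φ (v t) = 0) : Θ v = 0 :=
  calc Θ v = Θ (update v s (φ (v s))) := by rw [hs, update_eq_self]
    _ = Θ (update v t (φ (v t))) := hφ v s t
    _ = 0 := by rw [ht, Θ.map_update_zero]

variable (Θ) in
def center (hd : 3 ≤ d) : Subalgebra R (Module.End R V) where
  carrier := {φ | IsCentral Θ φ}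
  mul_mem' := IsCentral.mul hd
  add_mem' := IsCentral.add
  algebraMap_mem' := isCentral_algebraMap

end Center

section Diagonal

variable {k V N ι : Type*} [Field k] [AddCommGroup V] [Module k V] [AddCommGroup N] [Module k N]
  {d : ℕ} (Θ : MultilinearMap k (fun _ : Fin d => V) N)

def IsDiagonalBasis (β : Basis ι k V) : Prop :=
  ∀ j : Fin d → ι, (¬ ∀ s s', j s = j s') → Θ (β ∘ j) = 0

variable {Θ} in
theorem IsDiagonalBasis.isCentral_of_apply_basis {β : Basis ι k V} (hβ : IsDiagonalBasis Θ β)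
    {μ : ι → k} {φ : Module.End k V} (hφ : ∀ i, φ (β i) = μ i • β i) : IsCentral Θ φ := by
  refine isCentral_of_forall_basis β fun j s t => ?_
  have hupd : ∀ r, Θ (update (β ∘ j) r (φ (β (j r)))) = μ (j r) • Θ (β ∘ j) := fun r => by
    rw [hφ, Θ.map_update_smul, show β (j r) = (β ∘ j) r from rfl, update_eq_self]
  by_cases hconst : ∀ s s', j s = j s'
  · rw [hupd, hupd, hconst s t]
  · rw [hupd, hupd, hβ j hconst, smul_zero, smul_zero]

variable [Fintype ι]

theorem map_eq_sum_basis (β : Basis ι k V) (v : Fin d → V) :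
    Θ v = ∑ j : Fin d → ι, (∏ s, β.repr (v s) (j s)) • Θ (β ∘ j) := by
  conv_lhs => rw [show v = fun s => ∑ m, β.repr (v s) m • β m from
    funext fun s => (β.sum_repr (v s)).symm]
  simp only [Θ.map_sum, Θ.map_smul_univ, comp_def]

theorem map_update_eq_sum_basis (β : Basis ι k V) (j : Fin d → ι) (s : Fin d) (x : V) :
    Θ (update (β ∘ j) s x) = ∑ m, β.repr x m • Θ (β ∘ update j s m) := by
  conv_lhs => rw [← β.sum_repr x]
  simp only [Θ.map_update_sum, Θ.map_update_smul, comp_update]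

variable {Θ} {β : Basis ι k V}

theorem IsDiagonalBasis.map_const_ne_zero (hβ : IsDiagonalBasis Θ β) {s₀ : Fin d}
    (hnd : ∀ u : V, (∀ v : Fin d → V, Θ (update v s₀ u) = 0) → u = 0) (i : ι) :
    Θ (fun _ => β i) ≠ 0 := by
  intro hi
  refine β.ne_zero i (hnd (β i) fun v => ?_)
  rw [map_eq_sum_basis Θ β]
  refine Finset.sum_eq_zero fun j _ => ?_
  by_cases hj : j s₀ = i
  · by_cases hconst : ∀ s s', j s = j s'
    · have : β ∘ j = fun _ => β i := funext fun s => by rw [comp_apply, hconst s s₀, hj]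
      rw [this, hi, smul_zero]
    · rw [hβ j hconst, smul_zero]
  · rw [Finset.prod_eq_zero (Finset.mem_univ s₀) (by simp [Finsupp.single_eq_of_ne hj]),
      zero_smul]

theorem IsDiagonalBasis.map_update_const (hβ : IsDiagonalBasis Θ β) {s t : Fin d} (hst : s ≠ t)
    (i : ι) (x : V) : Θ (update (fun _ => β i) s x) = β.repr x i • Θ (fun _ => β i) := by
  rw [show (fun _ => β i) = β ∘ fun _ : Fin d => i from rfl, map_update_eq_sum_basis,
    Finset.sum_eq_single i]
  · rw [update_eq_self]
  · intro m _ hmi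
    rw [hβ _ fun h => hmi (by simpa [update_of_ne hst.symm] using h s t), smul_zero]
  · simp

theorem IsDiagonalBasis.map_update_eq_zero (hβ : IsDiagonalBasis Θ β) {j : Fin d → ι}
    {s t t' : Fin d} (ht : t ≠ s) (ht' : t' ≠ s) (hj : j t ≠ j t') (x : V) :
    Θ (update (β ∘ j) s x) = 0 := by
  rw [map_update_eq_sum_basis]
  refine Finset.sum_eq_zero fun m _ => ?_
  rw [hβ _ fun h => hj (by simpa [update_of_ne ht, update_of_ne ht'] using h t t'), smul_zero]

theorem IsDiagonalBasis.repr_apply_basis_eq_zero (hd : 3 ≤ d) (hβ : IsDiagonalBasis Θ β)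
    {i j : ι} (hΘi : Θ (fun _ => β i) ≠ 0) {φ : Module.End k V} (hφ : IsCentral Θ φ)
    (hij : i ≠ j) : β.repr (φ (β j)) i = 0 := by
  let a : Fin d := ⟨0, by omega⟩
  let b : Fin d := ⟨1, by omega⟩
  have hab : a ≠ b := by simp [a, b, Fin.ext_iff]
  obtain ⟨c, hca, hcb⟩ := Fin.exists_ne_and_ne_of_two_lt a b (by omega)
  have h := hφ (β ∘ update (fun _ => i) a j) a b
  simp only [comp_apply, update_self, update_of_ne hab.symm, comp_update, update_idem] at h
  rw [← comp_update, show (β ∘ fun _ : Fin d => i) = fun _ => β i from rfl,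
    hβ.map_update_const hab,
    hβ.map_update_eq_zero hab hcb (by simpa [update_of_ne hca] using hij.symm)] at h
  exact (smul_eq_zero.mp h).resolve_right hΘi

theorem IsDiagonalBasis.apply_basis_eq_smul (hd : 3 ≤ d) (hβ : IsDiagonalBasis Θ β)
    (hΘβ : ∀ i, Θ (fun _ => β i) ≠ 0) {φ : Module.End k V} (hφ : IsCentral Θ φ) (j : ι) :
    φ (β j) = β.repr (φ (β j)) j • β j := by
  refine β.ext_elem fun i => ?_
  rcases eq_or_ne i j with rfl | hij
  · simp
  · simp [hβ.repr_apply_basis_eq_zero hd (hΘβ i) hφ hij, Finsupp.single_eq_of_ne hij]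

theorem IsDiagonalBasis.center_eq_range_diagonalEnd [DecidableEq ι] (hd : 3 ≤ d)
    (hβ : IsDiagonalBasis Θ β) (hΘβ : ∀ i, Θ (fun _ => β i) ≠ 0) :
    center Θ hd = β.diagonalEnd.range := by
  ext φ
  refine ⟨fun hφ => ⟨fun i => β.repr (φ (β i)) i, β.ext fun i => ?_⟩, ?_⟩
  · change β.diagonalEnd _ (β i) = _
    rw [β.diagonalEnd_apply_self, ← hβ.apply_basis_eq_smul hd hΘβ hφ]
  · rintro ⟨μ, rfl⟩
    exact hβ.isCentral_of_apply_basis (β.diagonalEnd_apply_self μ)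

theorem IsDiagonalBasis.nonempty_algEquiv_center (hd : 3 ≤ d) (hβ : IsDiagonalBasis Θ β)
    (hΘβ : ∀ i, Θ (fun _ => β i) ≠ 0) : Nonempty (center Θ hd ≃ₐ[k] (ι → k)) := by
  classical
  exact ⟨(Subalgebra.equivOfEq _ _ (hβ.center_eq_range_diagonalEnd hd hΘβ)).trans
    (AlgEquiv.ofInjective _ (Basis.diagonalEnd_injective β)).symm⟩

theorem exists_isDiagonalBasis_of_algEquiv [FiniteDimensional k V] (hd : 3 ≤ d)
    (e : center Θ hd ≃ₐ[k] (ι → k)) (hcard : Fintype.card ι = finrank k V) :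
    ∃ β : Basis ι k V, IsDiagonalBasis Θ β := by
  classical
  let p : ι → Module.End k V := fun i => e.symm (Pi.single i 1)
  have hp : OrthogonalIdempotents p :=
    (CompleteOrthogonalIdempotents.single fun _ => k).toOrthogonalIdempotents.map
      ((center Θ hd).val.comp e.symm.toAlgHom).toRingHom
  have hp0 : ∀ i, p i ≠ 0 := fun i h => by
    have h' : e.symm (Pi.single i 1) = 0 := Subtype.ext h
    simp at h'
  choose x hx using fun i => DFunLike.ne_iff.mp (hp0 i)
  refine ⟨basisOfLinearIndependentOfCardEqFinrank' _ (hp.linearIndependent_apply hx) hcard,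
    fun j hj => ?_⟩
  simp only [not_forall] at hj
  obtain ⟨s, t, hst⟩ := hj
  refine (e.symm (Pi.single (j s) 1)).2.map_eq_zero (s := s) (t := t) ?_ ?_
  · simpa using LinearMap.congr_fun (hp.idem (j s)) (x (j s))
  · simpa using LinearMap.congr_fun (hp.ortho hst) (x (j t))

end Diagonal

end MultilinearMap

/-- Let `Θ` be a nondegenerate symmetric `d`-multilinear form on an
`n`-dimensional `k`-vector space `V`. Then `(V,Θ)` is diagonalizable (there is a basis
`β₁, …, βₙ` of `V` with `Θ(β_{j₁}, …, β_{j_d}) = 0` unless `j₁ = ⋯ = j_d`) iff the center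
`Z(V,Θ)` is isomorphic as a `k`-algebra to `k × ⋯ × k` (`n` copies), i.e. there is a
bijection from `Z(V,Θ)` onto `kⁿ` preserving addition, scalar multiplication,
multiplication (composition) and the identity. -/
theorem stmt_9 {k V : Type*} [Field k] [AddCommGroup V] [Module k V]
    [FiniteDimensional k V] {d n : ℕ} (hd : 3 ≤ d)
    (hn : Module.finrank k V = n)
    (Θ : MultilinearMap k (fun _ : Fin d => V) k)
    (hsymm : ∀ (σ : Equiv.Perm (Fin d)) (v : Fin d → V), Θ (v ∘ σ) = Θ v)
    (hnd : ∀ u : V,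
      (∀ v : Fin d → V, Θ (Function.update v ⟨0, by omega⟩ u) = 0) → u = 0) :
    let i0 : Fin d := ⟨0, by omega⟩
    let i1 : Fin d := ⟨1, by omega⟩
    let Z : Set (Module.End k V) := {φ | ∀ v : Fin d → V,
      Θ (Function.update v i0 (φ (v i0))) = Θ (Function.update v i1 (φ (v i1)))}
    (∃ β : Module.Basis (Fin n) k V, ∀ j : Fin d → Fin n,
        (¬ ∀ s s' : Fin d, j s = j s') → Θ (fun s => β (j s)) = 0)
      ↔ (∃ F : Module.End k V → (Fin n → k),
          Set.BijOn F Z Set.univ ∧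
          (∀ φ ∈ Z, ∀ ψ ∈ Z, F (φ + ψ) = F φ + F ψ) ∧
          (∀ c : k, ∀ φ ∈ Z, F (c • φ) = c • F φ) ∧
          (∀ φ ∈ Z, ∀ ψ ∈ Z, F (φ * ψ) = F φ * F ψ) ∧
          F 1 = 1) := by
  intro i0 i1 Z
  have hZ : Z = Θ.center hd := Set.ext fun φ =>
    (MultilinearMap.isCentral_iff_of_perm_invariant hsymm (φ := φ)
      (by simp [i0, i1, Fin.ext_iff])).symm
  simp only [hZ, SetLike.mem_coe, ← Subalgebra.nonempty_algEquiv_iff_exists_bijOn]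
  constructor
  · rintro ⟨β, hβ⟩
    exact MultilinearMap.IsDiagonalBasis.nonempty_algEquiv_center hd hβ fun i =>
      MultilinearMap.IsDiagonalBasis.map_const_ne_zero hβ hnd i
  · rintro ⟨e⟩
    exact MultilinearMap.exists_isDiagonalBasis_of_algEquiv hd e (by simp [hn])
end

section
/- Let f ∈ ℂ[x₁,…,xₙ] be a homogeneous polynomial of degree d, P = (p_{ij}) ∈ GL(n,ℂ) an invertible matrix, and α₁,…,αₙ nonzero complex numbers with f = Σ_{i=1}^n αᵢ (Σ_{j=1}^n p_{ij} xⱼ)^d. Then f is unitarily diagonalizable, i.e. there exist a unitary matrix Q = (q_{ij}) and scalars λ₁,…,λₙ with f = Σ_{i=1}^n λᵢ (Σ_{j=1}^n q_{ij} xⱼ)^d, if and only if there exist nonzero scalars τ₁,…,τₙ ∈ ℂ such that the matrix obtained from P by multiplying its i-th row by τᵢ is unitary. -/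
open Matrix MvPolynomial

namespace Stmt17Aux

noncomputable def lin {n : ℕ} (B : Matrix (Fin n) (Fin n) ℂ) (i : Fin n) :
    MvPolynomial (Fin n) ℂ := ∑ j, C (B i j) * X j

lemma pderiv_lin {n : ℕ} (B : Matrix (Fin n) (Fin n) ℂ) (i k : Fin n) :
    pderiv k (lin B i) = C (B i k) := by
  rw [lin, map_sum, Finset.sum_eq_single k] <;>
    simp (config := {contextual := true}) [pderiv_X, Pi.single_apply, eq_comm]

lemma pderiv2_lin_pow {n d : ℕ} (hd : 3 ≤ d) (B : Matrix (Fin n) (Fin n) ℂ)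
    (i j k : Fin n) :
    pderiv j (pderiv k (lin B i ^ d)) =
      C (((d * (d - 1) : ℕ) : ℂ) * B i j * B i k) * lin B i ^ (d - 2) := by
  rw [Derivation.leibniz_pow, pderiv_lin]
  simp only [smul_eq_mul, nsmul_eq_mul, _root_.map_mul, map_natCast, Derivation.leibniz_pow,
    pderiv_lin, map_pow, Derivation.leibniz, pderiv_C, smul_zero, add_zero]
  have h2 : d - 1 - 1 = d - 2 := by omega
  have h3 : (pderiv j) ((d : MvPolynomial (Fin n) ℂ)) = 0 := by
    rw [← map_natCast (C : ℂ →+* MvPolynomial (Fin n) ℂ), pderiv_C]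
  rw [h2, h3, Nat.cast_mul]
  ring


end Stmt17Aux

namespace Stmt17Aux

lemma hess_eq {n d : ℕ} (hd : 3 ≤ d) (B : Matrix (Fin n) (Fin n) ℂ) (μ : Fin n → ℂ) :
    (Matrix.of fun j k => pderiv j (pderiv k (∑ i, C (μ i) * lin B i ^ d))) =
      (B.map C)ᵀ *
        Matrix.diagonal (fun i => C (((d * (d - 1) : ℕ) : ℂ) * μ i) * lin B i ^ (d - 2)) *
        (B.map C) := by
  refine Matrix.ext fun j k => ?_
  rw [Matrix.mul_apply, Matrix.of_apply,
    map_sum (pderiv k) (fun i => C (μ i) * lin B i ^ d) Finset.univ, map_sum (pderiv j)]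
  refine Finset.sum_congr rfl fun i _ => ?_
  rw [pderiv_C_mul, pderiv_C_mul, pderiv2_lin_pow hd, Matrix.mul_diagonal,
    Matrix.transpose_apply, Matrix.map_apply, Matrix.map_apply]
  simp only [C_mul]
  ring

end Stmt17Aux

namespace Stmt17Aux

lemma lin_one {n : ℕ} (i : Fin n) : lin (1 : Matrix (Fin n) (Fin n) ℂ) i = X i := by
  rw [lin, Finset.sum_eq_single i] <;>
    simp (config := {contextual := true}) [Matrix.one_apply, eq_comm]

lemma det_eq {n d : ℕ} (hd : 3 ≤ d) (A : Matrix (Fin n) (Fin n) ℂ) (α lam : Fin n → ℂ)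
    (h : (∑ i, C (α i) * X i ^ d) = ∑ i, C (lam i) * lin A i ^ d) :
    ∏ i, (C (((d * (d - 1) : ℕ) : ℂ) * α i) * X i ^ (d - 2)) =
      C (A.det) ^ 2 * ∏ i, (C (((d * (d - 1) : ℕ) : ℂ) * lam i) * lin A i ^ (d - 2)) := by
  have h1 : (∑ i, C (α i) * lin (1 : Matrix (Fin n) (Fin n) ℂ) i ^ d)
      = ∑ i, C (lam i) * lin A i ^ d := by
    simp only [lin_one]; exact h
  have e1 := hess_eq hd (1 : Matrix (Fin n) (Fin n) ℂ) α
  rw [h1] at e1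
  have h2 := congrArg Matrix.det (e1.symm.trans (hess_eq hd A lam))
  have hmap1 : (1 : Matrix (Fin n) (Fin n) ℂ).map (C : ℂ → MvPolynomial (Fin n) ℂ)
      = (1 : Matrix (Fin n) (Fin n) (MvPolynomial (Fin n) ℂ)) :=
    Matrix.map_one _ (map_zero (C : ℂ →+* MvPolynomial (Fin n) ℂ))
      (map_one (C : ℂ →+* MvPolynomial (Fin n) ℂ))
  have hmapA : (A.map (C : ℂ → MvPolynomial (Fin n) ℂ)).det = C A.det := by
    rw [(C : ℂ →+* MvPolynomial (Fin n) ℂ).map_det A, RingHom.mapMatrix_apply]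
  simp only [Matrix.det_mul, Matrix.det_transpose, Matrix.det_diagonal, hmap1, hmapA,
    Matrix.det_one, one_mul, mul_one, lin_one] at h2
  rw [h2]; ring

end Stmt17Aux

namespace Stmt17Aux

lemma eval_lin {n : ℕ} (A : Matrix (Fin n) (Fin n) ℂ) (v : Fin n → ℂ) (i : Fin n) :
    eval v (lin A i) = ∑ l, A i l * v l := by
  simp [lin]

lemma no_two {n d : ℕ} (hd : 3 ≤ d) (A : Matrix (Fin n) (Fin n) ℂ) (α lam : Fin n → ℂ)
    (hα : ∀ i, α i ≠ 0)
    (hEq : ∏ i, (C (((d * (d - 1) : ℕ) : ℂ) * α i) * X i ^ (d - 2)) =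
      C (A.det) ^ 2 * ∏ i, (C (((d * (d - 1) : ℕ) : ℂ) * lam i) * lin A i ^ (d - 2)))
    (i0 j k : Fin n) (hjk : j ≠ k) (hj : A i0 j ≠ 0) (hk : A i0 k ≠ 0) : False := by
  classical
  set s : ℂ := ∑ l ∈ (Finset.univ.erase j).erase k, A i0 l with hs
  obtain ⟨t, ht0, ht⟩ : ∃ t : ℂ, t ≠ 0 ∧ A i0 k * t + s ≠ 0 := by
    by_cases hcase : A i0 k * 1 + s = 0
    · refine ⟨2, two_ne_zero, ?_⟩
      intro h2
      apply hk
      have : A i0 k * 2 + s - (A i0 k * 1 + s) = A i0 k := by ring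
      rw [← this, h2, hcase, sub_zero]
    · exact ⟨1, one_ne_zero, hcase⟩
  set w : ℂ := -(A i0 k * t + s) / A i0 j with hw
  have hw0 : w ≠ 0 := div_ne_zero (neg_ne_zero.mpr ht) hj
  set v : Fin n → ℂ := fun l => if l = j then w else if l = k then t else 1 with hv
  have hvne : ∀ l, v l ≠ 0 := by
    intro l
    by_cases h1 : l = j
    · simpa [hv, h1] using hw0
    · by_cases h2 : l = k <;> simp [hv, h1, h2, ht0, (Ne.symm hjk : k ≠ j)]
  have hsum : ∑ l, A i0 l * v l = 0 := by
    have hk' : k ∈ Finset.univ.erase j := Finset.mem_erase.mpr ⟨hjk.symm, Finset.mem_univ k⟩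
    rw [← Finset.add_sum_erase _ _ (Finset.mem_univ j),
      ← Finset.add_sum_erase _ _ hk']
    have hrest : ∑ l ∈ (Finset.univ.erase j).erase k, A i0 l * v l = s := by
      rw [hs]
      refine Finset.sum_congr rfl fun l hl => ?_
      rcases Finset.mem_erase.mp hl with ⟨hlk, hl2⟩
      rcases Finset.mem_erase.mp hl2 with ⟨hlj, -⟩
      simp [hv, hlj, hlk]
    rw [hrest]
    have hvj : v j = w := by simp [hv]
    have hvk : v k = t := by simp [hv, hjk.symm]
    rw [hvj, hvk, hw, mul_div_cancel₀ _ hj]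
    ring
  have hL := congrArg (eval v) hEq
  rw [map_prod, _root_.map_mul, map_prod] at hL
  have hzero : eval v (C (((d * (d - 1) : ℕ) : ℂ) * lam i0) * lin A i0 ^ (d - 2)) = 0 := by
    rw [_root_.map_mul, map_pow, eval_lin, hsum, zero_pow (by omega), mul_zero]
  have hR : (∏ i, eval v (C (((d * (d - 1) : ℕ) : ℂ) * lam i) * lin A i ^ (d - 2))) = 0 :=
    Finset.prod_eq_zero (Finset.mem_univ i0) hzero
  rw [hR, mul_zero] at hL
  have : ∀ i, eval v (C (((d * (d - 1) : ℕ) : ℂ) * α i) * X i ^ (d - 2)) ≠ 0 := by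
    intro i
    rw [_root_.map_mul, map_pow, eval_C, eval_X]
    refine mul_ne_zero (mul_ne_zero ?_ (hα i)) (pow_ne_zero _ (hvne i))
    exact_mod_cast Nat.cast_ne_zero.mpr (Nat.mul_ne_zero (by omega) (by omega))
  exact (Finset.prod_ne_zero_iff.mpr fun i _ => this i) hL

end Stmt17Aux

namespace Stmt17Aux

lemma aeval_lin {n : ℕ} (B M : Matrix (Fin n) (Fin n) ℂ) (i : Fin n) :
    aeval (fun j => lin B j) (lin M i) = lin (M * B) i := by
  simp only [lin, map_sum, _root_.map_mul, aeval_C, aeval_X, algebraMap_eq, Finset.mul_sum,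
    Matrix.mul_apply, map_sum, Finset.sum_mul]
  rw [Finset.sum_comm]
  exact Finset.sum_congr rfl fun k _ => Finset.sum_congr rfl fun j _ => by
    rw [mul_assoc]

lemma subst_sum {n d : ℕ} (B M : Matrix (Fin n) (Fin n) ℂ) (c : Fin n → ℂ) :
    aeval (fun j => lin B j) (∑ i, C (c i) * lin M i ^ d) =
      ∑ i, C (c i) * lin (M * B) i ^ d := by
  rw [map_sum]
  exact Finset.sum_congr rfl fun i _ => by
    rw [_root_.map_mul, map_pow, aeval_lin, aeval_C, algebraMap_eq]

lemma lin_ne_zero_stuff {n d : ℕ} (hd : 3 ≤ d) (A : Matrix (Fin n) (Fin n) ℂ)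
    (α lam : Fin n → ℂ) (hα : ∀ i, α i ≠ 0)
    (hEq : ∏ i, (C (((d * (d - 1) : ℕ) : ℂ) * α i) * X i ^ (d - 2)) =
      C (A.det) ^ 2 * ∏ i, (C (((d * (d - 1) : ℕ) : ℂ) * lam i) * lin A i ^ (d - 2)))
    (i : Fin n) : lin A i ≠ 0 := by
  intro h0
  have : (C (((d * (d - 1) : ℕ) : ℂ) * lam i) * lin A i ^ (d - 2)) = 0 := by
    rw [h0, zero_pow (by omega : d - 2 ≠ 0), mul_zero]
  have hR : C (A.det) ^ 2 * ∏ i, (C (((d * (d - 1) : ℕ) : ℂ) * lam i) * lin A i ^ (d - 2))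
      = 0 := by
    rw [Finset.prod_eq_zero (Finset.mem_univ i) this, mul_zero]
  rw [hR] at hEq
  have : ∀ j : Fin n, (C (((d * (d - 1) : ℕ) : ℂ) * α j) * X j ^ (d - 2))
      ≠ (0 : MvPolynomial (Fin n) ℂ) := by
    intro j
    refine mul_ne_zero ?_ (pow_ne_zero _ (X_ne_zero j))
    rw [Ne, C_eq_zero]
    exact mul_ne_zero (Nat.cast_ne_zero.mpr (Nat.mul_ne_zero (by omega) (by omega))) (hα j)
  exact (Finset.prod_ne_zero_iff.mpr fun j _ => this j) hEq

end Stmt17Aux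


open Stmt17Aux

/-- Let `f ∈ ℂ[x₁,…,xₙ]` be homogeneous of degree `d ≥ 3`,
`P ∈ GL(n,ℂ)` and `α₁,…,αₙ` nonzero with `f = Σᵢ αᵢ (Σⱼ p_{ij} xⱼ)^d`. Then `f` is unitarily
diagonalizable iff there are nonzero scalars `τ₁,…,τₙ` such that the matrix obtained from `P`
by multiplying its `i`-th row by `τᵢ` is unitary. -/
theorem stmt_17 {n d : ℕ} (hd : 3 ≤ d)
    (f : MvPolynomial (Fin n) ℂ)
    (P : Matrix (Fin n) (Fin n) ℂ) (hP : IsUnit P)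
    (α : Fin n → ℂ) (hα : ∀ i, α i ≠ 0)
    (hf : f = ∑ i, C (α i) * (∑ j, C (P i j) * X j) ^ d) :
    (∃ Q : Matrix (Fin n) (Fin n) ℂ, Q * Qᴴ = 1 ∧
        ∃ lam : Fin n → ℂ, f = ∑ i, C (lam i) * (∑ j, C (Q i j) * X j) ^ d)
      ↔ (∃ τ : Fin n → ℂ, (∀ i, τ i ≠ 0) ∧
          (Matrix.of fun i j => τ i * P i j) * (Matrix.of fun i j => τ i * P i j)ᴴ = 1) := by
  classical
  have hPd : IsUnit P.det := P.isUnit_iff_isUnit_det.mp hP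
  constructor
  · rintro ⟨Q, hQ, lam, hfQ⟩
    -- pass to A = Q * P⁻¹
    set A : Matrix (Fin n) (Fin n) ℂ := Q * P⁻¹ with hA
    have hQunit : IsUnit Q := ⟨⟨Q, Qᴴ, hQ, mul_eq_one_comm.mp hQ⟩, rfl⟩
    have hPinv_unit : IsUnit P⁻¹ :=
      ⟨⟨P⁻¹, P, Matrix.nonsing_inv_mul P hPd, Matrix.mul_nonsing_inv P hPd⟩, rfl⟩
    have hAP : A * P = Q := by
      rw [hA, Matrix.mul_assoc, Matrix.nonsing_inv_mul P hPd, Matrix.mul_one]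
    have h0 : ∑ i, C (α i) * lin P i ^ d = ∑ i, C (lam i) * lin Q i ^ d :=
      hf.symm.trans hfQ
    have h1 : ∑ i, C (α i) * X i ^ d = ∑ i, C (lam i) * lin A i ^ d := by
      have := congrArg (aeval (fun j => lin P⁻¹ j)) h0
      rw [subst_sum, subst_sum, Matrix.mul_nonsing_inv P hPd] at this
      simpa [lin_one] using this
    have hEq := det_eq hd A α lam h1
    have hrow : ∀ i, ∃ j, A i j ≠ 0 := by
      intro i
      by_contra hno
      push_neg at hno
      exact lin_ne_zero_stuff hd A α lam hα hEq i (by simp [lin, hno])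
    have huniq : ∀ i j k, A i j ≠ 0 → A i k ≠ 0 → j = k := by
      intro i j k hj hk
      by_contra hjk
      exact no_two hd A α lam hα hEq i j k hjk hj hk
    -- the support function
    choose σ hσ using hrow
    have hcol : ∀ i j, j ≠ σ i → A i j = 0 := by
      intro i j hne
      by_contra hAij
      exact hne (huniq i j (σ i) hAij (hσ i))
    -- injectivity of σ
    have hAunit : IsUnit A := hQunit.mul hPinv_unit
    have hAd : IsUnit A.det := A.isUnit_iff_isUnit_det.mp hAunit
    have hAB : A * A⁻¹ = 1 := Matrix.mul_nonsing_inv A hAd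
    have hentry : ∀ i i' : Fin n, (1 : Matrix (Fin n) (Fin n) ℂ) i i'
        = A i (σ i) * A⁻¹ (σ i) i' := by
      intro i i'
      rw [← hAB, Matrix.mul_apply]
      rw [Finset.sum_eq_single (σ i)]
      · intro b _ hb
        rw [hcol i b hb, zero_mul]
      · intro h; exact absurd (Finset.mem_univ _) h
    have hinj : Function.Injective σ := by
      intro i i' hii
      by_contra hne
      have h10 : (1 : Matrix (Fin n) (Fin n) ℂ) i i' = 0 := Matrix.one_apply_ne hne
      have hzero : A⁻¹ (σ i) i' = 0 := by
        have := (hentry i i').symm.trans h10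
        rcases mul_eq_zero.mp this with h | h
        · exact absurd h (hσ i)
        · exact h
      have h11 : (1 : Matrix (Fin n) (Fin n) ℂ) i' i' = 1 := Matrix.one_apply_eq i'
      rw [hentry i' i', ← hii, hzero, mul_zero] at h11
      exact one_ne_zero h11.symm
    have hbij : Function.Bijective σ := Finite.injective_iff_bijective.mp hinj
    let e : Fin n ≃ Fin n := Equiv.ofBijective σ hbij
    refine ⟨fun m => A (e.symm m) m, fun m => ?_, ?_⟩
    · show A (e.symm m) m ≠ 0
      have hsm : σ (e.symm m) = m := e.apply_symm_apply m
      have h' := hσ (e.symm m)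
      rwa [hsm] at h'
    · have hM : ∀ m j, A (e.symm m) m * P m j = Q (e.symm m) j := by
        intro m j
        have hsm : σ (e.symm m) = m := e.apply_symm_apply m
        rw [← hAP, Matrix.mul_apply, Finset.sum_eq_single m]
        · intro b _ hb
          rw [hcol (e.symm m) b (by rw [hsm]; exact hb), zero_mul]
        · intro h; exact absurd (Finset.mem_univ _) h
      refine Matrix.ext fun m m' => ?_
      rw [Matrix.mul_apply]
      have : ∀ j, (Matrix.of fun i j => A (e.symm i) i * P i j) m j *
          ((Matrix.of fun i j => A (e.symm i) i * P i j)ᴴ) j m'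
          = Q (e.symm m) j * Qᴴ j (e.symm m') := by
        intro j
        rw [Matrix.conjTranspose_apply, Matrix.conjTranspose_apply, Matrix.of_apply,
          Matrix.of_apply, hM, hM]
      rw [Finset.sum_congr rfl fun j _ => this j, ← Matrix.mul_apply, hQ]
      by_cases hmm : m = m'
      · subst hmm; rw [Matrix.one_apply_eq, Matrix.one_apply_eq]
      · rw [Matrix.one_apply_ne hmm, Matrix.one_apply_ne (fun h => hmm (e.symm.injective h))]
  · rintro ⟨τ, hτ, hunit⟩
    refine ⟨Matrix.of fun i j => τ i * P i j, hunit, fun i => α i / τ i ^ d, ?_⟩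
    rw [hf]
    refine Finset.sum_congr rfl fun i _ => ?_
    have hlin : (∑ j, C ((Matrix.of fun i j => τ i * P i j) i j) * X j)
        = C (τ i) * ∑ j, C (P i j) * X j := by
      rw [Finset.mul_sum]
      exact Finset.sum_congr rfl fun j _ => by rw [Matrix.of_apply, C_mul, mul_assoc]
    rw [hlin, mul_pow, ← mul_assoc, ← C_pow, ← C_mul, div_mul_cancel₀ _ (pow_ne_zero d (hτ i))]
end

section
/- A real symmetric d-tensor A = (a_{i₁⋯i_d}) of dimension n is symmetrically odeco — i.e. there exists a real orthogonal matrix O ∈ O(n,ℝ) such that the d-congruence AO^d is a diagonal tensor, equivalently A = Σ_{i=1}^n λᵢ vᵢ^{⊗d} for real scalars λᵢ and an orthonormal basis v₁,…,vₙ of ℝⁿ — if and only if the slice matrices A^{(i₃⋯i_d)} pairwise commute. -/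
/-!
If `AO^d` is diagonal with diagonal entries `λ_k`, then `A = ∑ λ_k v_k^{⊗d}` for the columns `v_k`
of `O`, so each slice is `O D Oᵀ` with `D` diagonal, and such matrices commute.
Conversely, the slices are commuting symmetric matrices, so a single orthogonal `O` diagonalizes
all of them. Contracting the first two indices of `A` against `O` turns the entries of `AO^d`
into combinations of entries of the diagonal matrices `Oᵀ A^{(c)} O`; hence the entry at a
multi-index `w` vanishes as soon as `w₁ ≠ w₂`, and by symmetry every non-constant multi-index can
be permuted into that form.
-/

open Matrix

open scoped Function in
open Module.End in
theorem LinearMap.IsSymmetric.exists_orthonormalBasis_forall_apply_eq_smul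
    {𝕜 E α : Type*} [RCLike 𝕜] [NormedAddCommGroup E] [InnerProductSpace 𝕜 E]
    [FiniteDimensional 𝕜 E] {n : ℕ} (hn : Module.finrank 𝕜 E = n) {T : α → Module.End 𝕜 E}
    (hT : ∀ a, (T a).IsSymmetric) (hC : Pairwise (Commute on T)) :
    ∃ (b : OrthonormalBasis (Fin n) 𝕜 E) (χ : Fin n → α → 𝕜), ∀ k a, T a (b k) = χ k a • b k := by
  classical
  let V (χ : α → 𝕜) : Submodule 𝕜 E := ⨅ a, eigenspace (T a) (χ a)
  have hV : DirectSum.IsInternal V := directSum_isInternal_of_pairwise_commute hT hC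
  have : Finite {χ // V χ ≠ ⊥} :=
    (WellFoundedGT.finite_ne_bot_of_iSupIndep hV.submodule_iSupIndep).to_subtype
  have := Fintype.ofFinite {χ // V χ ≠ ⊥}
  have hV' := DirectSum.isInternal_ne_bot_iff.mpr hV
  have hO := (orthogonalFamily_iInf_eigenspaces hT).comp (Subtype.val_injective (p := (V · ≠ ⊥)))
  refine ⟨hV'.subordinateOrthonormalBasis hn hO,
    fun k => (hV'.subordinateOrthonormalBasisIndex hn k hO).1, fun k a => ?_⟩
  exact mem_eigenspace_iff.mp
    ((Submodule.mem_iInf _).mp (hV'.subordinateOrthonormalBasis_subordinate hn k hO) a)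

theorem Matrix.exists_orthogonal_forall_isDiag_of_commute {α : Type*} {n : ℕ}
    (M : α → Matrix (Fin n) (Fin n) ℝ) (hM : ∀ a, (M a).IsHermitian)
    (hcomm : ∀ a a', Commute (M a) (M a')) :
    ∃ O : Matrix (Fin n) (Fin n) ℝ, Oᵀ * O = 1 ∧ ∀ a, (Oᵀ * M a * O).IsDiag := by
  have hT : ∀ a, (toEuclideanLin (M a)).IsSymmetric :=
    fun a => isSymmetric_toEuclideanLin_iff.mpr (hM a)
  have hC : Pairwise fun a a' => Commute (toEuclideanLin (M a)) (toEuclideanLin (M a')) :=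
    fun a a' _ => LinearMap.ext fun x => by
      simp [toLpLin_apply, mulVec_mulVec, (hcomm a a').eq]
  obtain ⟨b, χ, hb⟩ := LinearMap.IsSymmetric.exists_orthonormalBasis_forall_apply_eq_smul
    finrank_euclideanSpace_fin hT hC
  set O := (EuclideanSpace.basisFun (Fin n) ℝ).toBasis.toMatrix b
  have hO : Oᵀ * O = 1 := by
    simpa using
      (EuclideanSpace.basisFun (Fin n) ℝ).toMatrix_orthonormalBasis_conjTranspose_mul_self b
  refine ⟨O, hO, fun a => ?_⟩
  have : M a * O = O * diagonal (χ · a) := by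
    ext i k
    rw [mul_diagonal]
    simpa [O, Module.Basis.toMatrix_apply, mul_apply, mulVec, dotProduct, mul_comm]
      using congrArg (· i) (hb k a)
  rw [Matrix.mul_assoc, this, ← Matrix.mul_assoc, hO, Matrix.one_mul]
  exact isDiag_diagonal _

theorem Matrix.commute_mul_diagonal_mul_transpose {κ : Type*} [Fintype κ] [DecidableEq κ]
    {O : Matrix κ κ ℝ} (hO : Oᵀ * O = 1) (d d' : κ → ℝ) :
    Commute (O * diagonal d * Oᵀ) (O * diagonal d' * Oᵀ) := by
  have hmul : ∀ d d' : κ → ℝ,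
      O * diagonal d * Oᵀ * (O * diagonal d' * Oᵀ) = O * (diagonal d * diagonal d') * Oᵀ := by
    intro d d'
    simp only [Matrix.mul_assoc, ← Matrix.mul_assoc Oᵀ, hO, Matrix.one_mul]
  rw [Commute, SemiconjBy, hmul, hmul, (commute_diagonal d d').eq]

theorem Fin.sum_univ_fun_cons {κ : Type*} [Fintype κ] {m : ℕ} {M : Type*} [AddCommMonoid M]
    (f : (Fin (m + 1) → κ) → M) : ∑ x, f x = ∑ i, ∑ c : Fin m → κ, f (Fin.cons i c) := by
  rw [← (Fin.consEquiv fun _ => κ).sum_comp f, Fintype.sum_prod_type]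
  rfl

theorem Fin.exists_perm_apply_zero_ne_apply_one {m : ℕ} {α : Type*}
    {f : Fin (m + 2) → α} (hf : ¬ ∀ s s', f s = f s') :
    ∃ σ : Equiv.Perm (Fin (m + 2)), f (σ 0) ≠ f (σ 1) := by
  by_contra! h
  have hconst : ∀ s, f s = f 0 := fun s => by
    by_cases hs : s = 0
    · rw [hs]
    · simpa [Equiv.swap_apply_of_ne_of_ne Fin.zero_ne_one (Ne.symm hs)] using
        (h (Equiv.swap 1 s)).symm
  exact hf fun s s' => by rw [hconst s, hconst s']

namespace Tensor

variable {ι κ : Type*}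

def IsDiagonal (T : (ι → κ) → ℝ) : Prop :=
  ∀ jdx : ι → κ, (¬ ∀ s s', jdx s = jdx s') → T jdx = 0

def IsSymmetric (A : (ι → κ) → ℝ) : Prop :=
  ∀ (σ : Equiv.Perm ι) (idx : ι → κ), A (idx ∘ σ) = A idx

def slice {m : ℕ} (A : (Fin (m + 2) → κ) → ℝ) (c : Fin m → κ) : Matrix κ κ ℝ :=
  Matrix.of fun i j => A (Fin.cons i (Fin.cons j c))

theorem IsSymmetric.isHermitian_slice {m : ℕ} {A : (Fin (m + 2) → κ) → ℝ} (hA : IsSymmetric A)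
    (c : Fin m → κ) : (slice A c).IsHermitian := by
  ext i j
  have : (Fin.cons j (Fin.cons i c) : Fin (m + 2) → κ) ∘ Equiv.swap 0 1 =
      Fin.cons i (Fin.cons j c) := by
    ext t
    refine Fin.cases ?_ (Fin.cases ?_ fun t => ?_) t
    · simp
    · simp
    · simp [Equiv.swap_apply_of_ne_of_ne (Fin.succ_ne_zero _) (Fin.succ_succ_ne_one _)]
  simp only [slice, conjTranspose_apply, of_apply, star_trivial]
  rw [← this, hA]

variable [Fintype ι] [DecidableEq ι] [Fintype κ]

def congruence (A : (ι → κ) → ℝ) (P : Matrix κ κ ℝ) (jdx : ι → κ) : ℝ :=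
  ∑ idx, A idx * ∏ t, P (idx t) (jdx t)

theorem congruence_congruence (A : (ι → κ) → ℝ) (P Q : Matrix κ κ ℝ) :
    congruence (congruence A P) Q = congruence A (P * Q) := by
  ext kdx
  simp only [congruence, Finset.sum_mul, mul_assoc, ← Finset.prod_mul_distrib]
  rw [Finset.sum_comm]
  refine Finset.sum_congr rfl fun idx _ => ?_
  simp only [← Finset.mul_sum, mul_apply, Fintype.prod_sum]

theorem congruence_one [DecidableEq κ] (A : (ι → κ) → ℝ) : congruence A 1 = A := by
  ext jdx
  simp [congruence, one_apply, Finset.prod_boole, ← funext_iff]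

theorem congruence_apply_of_isDiagonal [Nonempty ι] {T : (ι → κ) → ℝ} (hT : IsDiagonal T)
    (Q : Matrix κ κ ℝ) (jdx : ι → κ) :
    congruence T Q jdx = ∑ k, T (fun _ => k) * ∏ t, Q k (jdx t) := by
  refine (Fintype.sum_of_injective _ Function.const_injective _ _
    (fun idx hidx => ?_) fun k => rfl).symm
  rw [hT idx fun h => hidx ⟨idx (Classical.arbitrary ι), funext fun t => h _ _⟩, zero_mul]

theorem eq_sum_of_isDiagonal_congruence [Nonempty ι] [DecidableEq κ] {A : (ι → κ) → ℝ}
    {O : Matrix κ κ ℝ} (hO : Oᵀ * O = 1) (hA : IsDiagonal (congruence A O)) (idx : ι → κ) :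
    A idx = ∑ k, congruence A O (fun _ => k) * ∏ t, O (idx t) k := by
  conv_lhs => rw [← congruence_one A, ← mul_eq_one_comm.mp hO, ← congruence_congruence]
  exact congruence_apply_of_isDiagonal hA Oᵀ idx

theorem slice_eq_mul_diagonal_mul_transpose {m : ℕ} [DecidableEq κ]
    {A : (Fin (m + 2) → κ) → ℝ} {O : Matrix κ κ ℝ} (hO : Oᵀ * O = 1)
    (hA : IsDiagonal (congruence A O)) (c : Fin m → κ) :
    slice A c = O * diagonal (fun k => congruence A O (fun _ => k) * ∏ t, O (c t) k) * Oᵀ := by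
  ext i j
  rw [slice, of_apply, eq_sum_of_isDiagonal_congruence hO hA]
  simp only [mul_apply, diagonal_apply, transpose_apply, mul_ite, mul_zero,
    Finset.sum_ite_eq', Finset.mem_univ, if_true, Fin.prod_univ_succ, Fin.cons_zero, Fin.cons_succ]
  exact Finset.sum_congr rfl fun k _ => by ring

theorem commute_slice_of_isDiagonal_congruence {m : ℕ} [DecidableEq κ]
    {A : (Fin (m + 2) → κ) → ℝ} {O : Matrix κ κ ℝ} (hO : Oᵀ * O = 1)
    (hA : IsDiagonal (congruence A O)) (c c' : Fin m → κ) :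
    Commute (slice A c) (slice A c') := by
  rw [slice_eq_mul_diagonal_mul_transpose hO hA, slice_eq_mul_diagonal_mul_transpose hO hA]
  exact Matrix.commute_mul_diagonal_mul_transpose hO _ _

theorem IsSymmetric.congruence {A : (ι → κ) → ℝ} (hA : IsSymmetric A) (P : Matrix κ κ ℝ) :
    IsSymmetric (congruence A P) := by
  intro σ jdx
  refine Fintype.sum_equiv (Equiv.arrowCongr σ (Equiv.refl κ)) _ _ fun idx => ?_
  change _ = A (idx ∘ σ.symm) * ∏ t, P (idx (σ.symm t)) (jdx t)
  rw [hA, ← Equiv.prod_comp σ (fun t => P (idx (σ.symm t)) (jdx t))]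
  simp

theorem congruence_apply_eq_sum_slice {m : ℕ} (A : (Fin (m + 2) → κ) → ℝ) (P : Matrix κ κ ℝ)
    (w : Fin (m + 2) → κ) :
    congruence A P w =
      ∑ c : Fin m → κ, (Pᵀ * slice A c * P) (w 0) (w 1) * ∏ t, P (c t) (w t.succ.succ) := by
  simp only [congruence, Fin.sum_univ_fun_cons, Fin.prod_univ_succ, Fin.cons_zero, Fin.cons_succ,
    mul_apply, transpose_apply, slice, of_apply, Finset.sum_mul, Fin.succ_zero_eq_one,
    Fin.cons_one]
  rw [Finset.sum_comm]
  refine (Finset.sum_congr rfl fun j _ => Finset.sum_comm).trans (Finset.sum_comm.trans ?_)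
  exact Finset.sum_congr rfl fun c _ => Finset.sum_congr rfl fun j _ =>
    Finset.sum_congr rfl fun i _ => by ring

theorem isDiagonal_congruence_of_forall_isDiag {m : ℕ} {A : (Fin (m + 2) → κ) → ℝ}
    (hA : IsSymmetric A) {P : Matrix κ κ ℝ} (hP : ∀ c, (Pᵀ * slice A c * P).IsDiag) :
    IsDiagonal (congruence A P) := by
  intro jdx hjdx
  obtain ⟨σ, hσ⟩ := Fin.exists_perm_apply_zero_ne_apply_one hjdx
  rw [← hA.congruence P σ, congruence_apply_eq_sum_slice]
  exact Finset.sum_eq_zero fun c _ => mul_eq_zero_of_left (hP c hσ) _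

end Tensor

theorem stmt_18_general {n e : ℕ}
    (A : (Fin (e + 2) → Fin n) → ℝ)
    (hA : ∀ (σ : Equiv.Perm (Fin (e + 2))) (idx : Fin (e + 2) → Fin n), A (idx ∘ σ) = A idx) :
    (∃ O : Matrix (Fin n) (Fin n) ℝ, Oᵀ * O = 1 ∧
        ∀ jdx : Fin (e + 2) → Fin n, (¬ ∀ s s' : Fin (e + 2), jdx s = jdx s') →
          (∑ idx : Fin (e + 2) → Fin n, A idx * ∏ t, O (idx t) (jdx t)) = 0)
      ↔ (∀ c c' : Fin e → Fin n,
          Matrix.of (fun i j => A (Fin.cons i (Fin.cons j c)))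
              * Matrix.of (fun i j => A (Fin.cons i (Fin.cons j c')))
            = Matrix.of (fun i j => A (Fin.cons i (Fin.cons j c')))
              * Matrix.of (fun i j => A (Fin.cons i (Fin.cons j c)))) := by
  constructor
  · rintro ⟨O, hO, hdiag⟩ c c'
    exact (Tensor.commute_slice_of_isDiagonal_congruence hO hdiag c c').eq
  · intro hcomm
    obtain ⟨O, hO, hdiag⟩ := Matrix.exists_orthogonal_forall_isDiag_of_commute (Tensor.slice A)
      (Tensor.IsSymmetric.isHermitian_slice hA) hcomm
    exact ⟨O, hO, Tensor.isDiagonal_congruence_of_forall_isDiag hA hdiag⟩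

/-- A real symmetric `d`-tensor `A` (here `d = e + 2 ≥ 3`) of dimension `n`
is symmetrically odeco — there is a real orthogonal matrix `O` such that the `d`-congruence
`AO^d` is a diagonal tensor — iff the slice matrices `A^{(i₃⋯i_d)}` pairwise commute. -/
theorem stmt_18 {n e : ℕ} (he : 1 ≤ e)
    (A : (Fin (e + 2) → Fin n) → ℝ)
    (hA : ∀ (σ : Equiv.Perm (Fin (e + 2))) (idx : Fin (e + 2) → Fin n), A (idx ∘ σ) = A idx) :
    (∃ O : Matrix (Fin n) (Fin n) ℝ, Oᵀ * O = 1 ∧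
        ∀ jdx : Fin (e + 2) → Fin n, (¬ ∀ s s' : Fin (e + 2), jdx s = jdx s') →
          (∑ idx : Fin (e + 2) → Fin n, A idx * ∏ t, O (idx t) (jdx t)) = 0)
      ↔ (∀ c c' : Fin e → Fin n,
          Matrix.of (fun i j => A (Fin.cons i (Fin.cons j c)))
              * Matrix.of (fun i j => A (Fin.cons i (Fin.cons j c')))
            = Matrix.of (fun i j => A (Fin.cons i (Fin.cons j c')))
              * Matrix.of (fun i j => A (Fin.cons i (Fin.cons j c)))) :=
  stmt_18_general A hA
end
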